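/- arXiv:2011.02996 — 6 statements merged into one kernel-verified Lean document; each statement's English description precedes it below -/
import Mathlib

section
/- For a one-dimensional discretized system with Hamiltonian H(p,q) = p²/(2m) + V(q) (so that ∂²H/∂p² = 1/m, ∂²H/∂p∂q = 0, ∂²H/∂q² = V''(q)), the Schur complement D4 − D3·D1⁻¹·D2 of the block Hamilton–Jacobi matrix Ã_N equals m·A_N, where A_N is the discrete Jacobi (second-difference) operator with entries (A_N)_{jk} = −1 if |j−k| = 1; (A_N)_{11} = a1/m + 1 − V''_1/m; (A_N)_{jj} = 2 − V''_j/m for 2 ≤ j ≤ N−1; (A_N)_{NN} = −a2/m + 1; and 0 otherwise. Consequently det Ã_N = (−1)^{N−1} m · det A_N. -/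
open Matrix Finset

/-! Since `D1 = -(1/m) • 1`, the Schur complement is `D4 + m • D2ᵀ * D2`, and `D2ᵀ * D2` is the Gram
matrix of the forward difference operator: the second-difference matrix with `2` on the interior
diagonal, `1` at the two ends (each end column meets a single row of `D2`) and `-1` next to the
diagonal. Adding `D4` gives `m • A_N`; the Schur determinant formula then yields
`det Ã_N = (-1/m)^(N-1) * m^N * det A_N`. -/

theorem sum_range_boole_mul_boole (n a b s t : ℕ) :
    ∑ i ∈ range n, (if a = i + s then (1 : ℝ) else 0) * (if b = i + t then 1 else 0) =
      if s ≤ a ∧ a < n + s ∧ a + t = b + s then 1 else 0 := by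
  simp_rw [ite_zero_mul_ite_zero, one_mul, sum_boole]
  split_ifs with h
  · rw [show {i ∈ range n | a = i + s ∧ b = i + t} = {a - s} by ext; simp; omega]
    simp
  · rw [show {i ∈ range n | a = i + s ∧ b = i + t} = ∅ by ext; simp; omega]
    simp

def forwardDiff (i j : ℕ) : ℝ := if j = i then -1 else if j = i + 1 then 1 else 0

-- The `i + 0` matches the shift pattern of `sum_range_boole_mul_boole`.
theorem forwardDiff_eq (i j : ℕ) :
    forwardDiff i j = (if j = i + 1 then 1 else 0) - (if j = i + 0 then 1 else 0) := by
  unfold forwardDiff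
  split_ifs <;> first | omega | norm_num

theorem sum_range_forwardDiff_mul_forwardDiff {n a b : ℕ} (ha : a ≤ n) (hb : b ≤ n) :
    ∑ i ∈ range n, forwardDiff i a * forwardDiff i b =
      if a + 1 = b ∨ b + 1 = a then -1
      else if a = b then (if a = 0 then 0 else 1) + (if a = n then 0 else 1) else 0 := by
  simp only [forwardDiff_eq, sub_mul, mul_sub, sum_sub_distrib, sum_range_boole_mul_boole]
  split_ifs <;> first | omega | norm_num

theorem transpose_forwardDiff_mul_forwardDiff {n N : ℕ} (hN : N ≤ n + 1) (j k : Fin N) :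
    ((of fun (i : Fin n) (j : Fin N) => forwardDiff i j)ᵀ *
        of fun (i : Fin n) (j : Fin N) => forwardDiff i j) j k =
      if (j : ℕ) + 1 = k ∨ (k : ℕ) + 1 = j then -1
      else if (j : ℕ) = k then (if (j : ℕ) = 0 then 0 else 1) + (if (j : ℕ) = n then 0 else 1)
      else 0 := by
  simp only [mul_apply, transpose_apply, of_apply]
  rw [Fin.sum_univ_eq_sum_range (fun i => forwardDiff i j * forwardDiff i k)]
  exact sum_range_forwardDiff_mul_forwardDiff (by omega) (by omega)

theorem inv_diagonal_const {K m : Type*} [Field K] [Fintype m] [DecidableEq m] (c : K) :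
    (diagonal fun _ : m => c)⁻¹ = diagonal fun _ => c⁻¹ := by
  rcases eq_or_ne c 0 with rfl | hc
  · simp
  · exact inv_eq_left_inv (by simp [hc])

theorem mul_inv_diagonal_const_mul {K l m n : Type*} [Field K] [Fintype m] [DecidableEq m]
    (A : Matrix l m K) (B : Matrix m n K) (c : K) :
    A * (diagonal fun _ : m => c)⁻¹ * B = c⁻¹ • (A * B) := by
  rw [inv_diagonal_const, ← smul_one_eq_diagonal]
  simp

theorem det_fromBlocks_diagonal_const {K m n : Type*} [Field K] [Fintype m] [DecidableEq m]
    [Fintype n] [DecidableEq n] {c : K} (hc : c ≠ 0) (B : Matrix m n K) (C : Matrix n m K)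
    (D : Matrix n n K) :
    (fromBlocks (diagonal fun _ => c) B C D).det =
      c ^ Fintype.card m * (D - C * (diagonal fun _ : m => c)⁻¹ * B).det := by
  have : Invertible (diagonal fun _ : m => c) := invertibleOfIsUnitDet _ (by simp [hc])
  rw [det_fromBlocks₁₁, invOf_eq_nonsing_inv, det_diagonal, prod_const, card_univ]

/-- For the discretized Hamiltonian `H(p,q) = p²/(2m) + V(q)`, the Schur complement of the
block Hamilton–Jacobi matrix equals `m • A_N`, and `det Ã_N = (-1)^(N-1) * m * det A_N`. -/
theorem discrete_schur_AN (N : ℕ) (hN : 2 ≤ N) (m a1 a2 : ℝ) (hm : m ≠ 0) (v : Fin N → ℝ)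
    (D1 : Matrix (Fin (N-1)) (Fin (N-1)) ℝ) (D2 : Matrix (Fin (N-1)) (Fin N) ℝ)
    (D3 : Matrix (Fin N) (Fin (N-1)) ℝ) (D4 : Matrix (Fin N) (Fin N) ℝ)
    (AN : Matrix (Fin N) (Fin N) ℝ)
    (hD1 : D1 = Matrix.diagonal (fun _ => -1/m))
    (hD2 : D2 = Matrix.of fun (i : Fin (N-1)) (j : Fin N) => if (j : ℕ) = (i : ℕ) then -1
      else if (j : ℕ) = (i : ℕ) + 1 then 1 else 0)
    (hD3 : D3 = D2ᵀ)
    (hD4 : D4 = Matrix.diagonal (fun (i : Fin N) => if (i : ℕ) = 0 then a1 - v i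
      else if (i : ℕ) = N - 1 then -a2 else -v i))
    (hAN : AN = Matrix.of fun (j k : Fin N) =>
      if (j : ℕ) + 1 = (k : ℕ) ∨ (k : ℕ) + 1 = (j : ℕ) then -1
      else if j = k then
        (if (j : ℕ) = 0 then a1/m + 1 - v j / m
         else if (j : ℕ) = N - 1 then -a2/m + 1
         else 2 - v j / m)
      else 0) :
    D4 - D3 * D1⁻¹ * D2 = m • AN ∧
    (Matrix.fromBlocks D1 D2 D3 D4).det = (-1)^(N-1) * m * AN.det := by
  have hgram (j k : Fin N) : (D2ᵀ * D2) j k =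
      if (j : ℕ) + 1 = k ∨ (k : ℕ) + 1 = j then -1
      else if (j : ℕ) = k then (if (j : ℕ) = 0 then 0 else 1) + (if (j : ℕ) = N - 1 then 0 else 1)
      else 0 := by
    rw [hD2]
    exact transpose_forwardDiff_mul_forwardDiff (by omega) j k
  have hschur : D4 - D3 * D1⁻¹ * D2 = m • AN := by
    rw [hD3, hD1, mul_inv_diagonal_const_mul, inv_div, div_neg, div_one]
    ext j k
    simp only [Matrix.sub_apply, Matrix.smul_apply, smul_eq_mul, hgram, hD4, hAN, diagonal_apply,
      of_apply, Fin.ext_iff]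
    split_ifs <;> first | omega | (field_simp; ring)
  refine ⟨hschur, ?_⟩
  rw [hD1, det_fromBlocks_diagonal_const (div_ne_zero (by norm_num) hm), ← hD1, hschur, det_smul,
    Fintype.card_fin, Fintype.card_fin, div_pow,
    show m ^ N = m ^ (N - 1) * m by rw [← pow_succ, Nat.sub_add_cancel (by omega)]]
  field_simp
end

section
/- Let M be the symmetric N×N tridiagonal matrix with off-diagonal entries −1, first diagonal entry a₁/m + 1, last diagonal entry −a₂/m + 1, and interior diagonal entries 2 (the case V'' = 0 of the discrete operator A_N). Then det M = a₁/m − a₂/m − (a₁a₂/m²)(N−1). -/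
/-!
Write `D_n(x, y)` for the determinant of `jacobiRobin n x y`. Expanding along the first row, and
the second resulting minor along its first column, gives the three-term recurrence
`D_{n+2}(x, y) = (x + 1) D_{n+1}(1, y) - D_n(1, y)`: deleting the first row and column turns the
corner `x + 1` into the interior entry `2 = 1 + 1`. Induction on `n` then gives
`D_n(x, y) = x + y + (n + 1) x y`.
-/

namespace Matrix

variable {R : Type*} [CommRing R]

def jacobiRobin (n : ℕ) (x y : R) : Matrix (Fin (n + 2)) (Fin (n + 2)) R :=
  of fun j k =>
    if (j : ℕ) + 1 = (k : ℕ) ∨ (k : ℕ) + 1 = (j : ℕ) then -1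
    else if j = k then (if (j : ℕ) = 0 then x + 1 else if (j : ℕ) = n + 1 then y + 1 else 2)
    else 0

theorem jacobiRobin_submatrix_succ_succ (n : ℕ) (x y : R) :
    (jacobiRobin (n + 1) x y).submatrix Fin.succ Fin.succ = jacobiRobin n 1 y := by
  ext j k
  simp only [jacobiRobin, submatrix_apply, of_apply, Fin.val_succ, Fin.succ_inj,
    Nat.add_right_cancel_iff, Nat.succ_ne_zero, if_false, one_add_one_eq_two]
  rcases eq_or_ne (j : ℕ) 0 with hj | hj <;> simp [hj]

theorem det_jacobiRobin_submatrix_succ_succAbove_one (n : ℕ) (x y : R) :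
    ((jacobiRobin (n + 2) x y).submatrix Fin.succ (1 : Fin (n + 4)).succAbove).det =
      -(jacobiRobin n 1 y).det := by
  set A := (jacobiRobin (n + 2) x y).submatrix Fin.succ (1 : Fin (n + 4)).succAbove
  have succAbove_one_zero : (1 : Fin (n + 4)).succAbove 0 = 0 := rfl
  have corner : A 0 0 = -1 := by simp [A, succAbove_one_zero, jacobiRobin]
  have column_zero (i : Fin (n + 2)) : A i.succ 0 = 0 := by
    simp [A, succAbove_one_zero, jacobiRobin, Fin.ext_iff, -Fin.val_eq_zero_iff]
  have minor : A.submatrix Fin.succ Fin.succ = jacobiRobin n 1 y := by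
    have : (1 : Fin (n + 4)).succAbove ∘ Fin.succ = Fin.succ ∘ Fin.succ := by
      funext k; ext; simp [Fin.succAbove, Fin.lt_def]
    rw [submatrix_submatrix, this, ← submatrix_submatrix, jacobiRobin_submatrix_succ_succ,
      jacobiRobin_submatrix_succ_succ]
  rw [det_succ_column_zero, Fin.sum_univ_succ, Fin.succAbove_zero, corner, minor,
    Finset.sum_eq_zero fun i _ => by rw [column_zero, mul_zero, zero_mul]]
  simp

theorem det_jacobiRobin_add_two (n : ℕ) (x y : R) :
    (jacobiRobin (n + 2) x y).det =
      (x + 1) * (jacobiRobin (n + 1) 1 y).det - (jacobiRobin n 1 y).det := by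
  set J := jacobiRobin (n + 2) x y
  have entry_zero : J 0 0 = x + 1 := by simp [J, jacobiRobin]
  have entry_one : J 0 1 = -1 := by simp [J, jacobiRobin]
  have row_zero (j : Fin (n + 2)) : J 0 j.succ.succ = 0 := by
    simp [J, jacobiRobin, Fin.ext_iff, -Fin.val_eq_zero_iff]
  rw [det_succ_row_zero, Fin.sum_univ_succ, Fin.sum_univ_succ, Fin.succAbove_zero,
    jacobiRobin_submatrix_succ_succ, entry_zero, Fin.succ_zero_eq_one, entry_one,
    det_jacobiRobin_submatrix_succ_succAbove_one,
    Finset.sum_eq_zero fun j _ => by rw [row_zero, mul_zero, zero_mul]]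
  simp only [Fin.val_zero, Fin.val_one, pow_zero, pow_one, add_zero]
  ring

theorem det_jacobiRobin (n : ℕ) (x y : R) :
    (jacobiRobin n x y).det = x + y + (n + 1) * x * y := by
  induction n using Nat.twoStepInduction generalizing x with
  | zero =>
    rw [show jacobiRobin 0 x y = !![x + 1, -1; -1, y + 1] by
      ext i j; fin_cases i <;> fin_cases j <;> rfl, det_fin_two_of]
    push_cast
    ring
  | one =>
    rw [show jacobiRobin 1 x y = !![x + 1, -1, 0; -1, 2, -1; 0, -1, y + 1] by
      ext i j; fin_cases i <;> fin_cases j <;> rfl, det_fin_three]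
    simp only [of_apply, cons_val', cons_val_zero, cons_val_one, cons_val, cons_val_fin_one]
    push_cast
    ring
  | more n ih ih₁ =>
    rw [det_jacobiRobin_add_two, ih, ih₁]
    push_cast
    ring

end Matrix

theorem free_discrete_det_general (N : ℕ) (hN : 2 ≤ N) (a₁ a₂ m : ℝ)
    (M : Matrix (Fin N) (Fin N) ℝ)
    (hM : M = Matrix.of fun (j k : Fin N) =>
      if (j : ℕ) + 1 = (k : ℕ) ∨ (k : ℕ) + 1 = (j : ℕ) then -1
      else if j = k then
        (if (j : ℕ) = 0 then a₁/m + 1 else if (j : ℕ) = N - 1 then -a₂/m + 1 else 2)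
      else 0) :
    M.det = a₁/m - a₂/m - (a₁ * a₂ / m ^ 2) * ((N : ℝ) - 1) := by
  obtain ⟨n, rfl⟩ : ∃ n, N = n + 2 := ⟨N - 2, by omega⟩
  rw [show M = Matrix.jacobiRobin n (a₁ / m) (-a₂ / m) from hM, Matrix.det_jacobiRobin]
  push_cast
  ring

/-- Determinant of the free discrete Jacobi matrix with Robin boundary modifications:
off-diagonal `-1`, diagonal `(a₁/m + 1, 2, …, 2, -a₂/m + 1)`. -/
theorem free_discrete_det (N : ℕ) (hN : 2 ≤ N) (a₁ a₂ m : ℝ) (hm : m ≠ 0)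
    (M : Matrix (Fin N) (Fin N) ℝ)
    (hM : M = Matrix.of fun (j k : Fin N) =>
      if (j : ℕ) + 1 = (k : ℕ) ∨ (k : ℕ) + 1 = (j : ℕ) then -1
      else if j = k then
        (if (j : ℕ) = 0 then a₁/m + 1 else if (j : ℕ) = N - 1 then -a₂/m + 1 else 2)
      else 0) :
    M.det = a₁/m - a₂/m - (a₁ * a₂ / m ^ 2) * ((N : ℝ) - 1) :=
  free_discrete_det_general N hN a₁ a₂ m M hM
end

section
/- Let H(p,q) = p²/(2m) + V(q) with m ≠ 0 and V twice differentiable, and consider the discrete Hamilton's equations q_{i+1} − q_i = (ε/m)p_i (i = 1,…,N−1) and p_i − p_{i−1} = −ε V'(q_i) (i = 2,…,N−1), with boundary conditions p₁ + εV'(q₁) = ∂f₁/∂q(q₁) and p_{N−1} = ∂f₂/∂q'(q_N). Then differentiating the discrete action S_d = Σ_{i=1}^{N−1} p_i(q_{i+1} − q_i) − ε Σ_{i=1}^{N−1} H(p_i,q_i) + f₁(q₁,b₁) − f₂(q_N,b₂) along a family of solutions parametrized by b₁ gives ∂S_d/∂b₁ = ∂f₁/∂b₁(q₁,b₁), where the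 partial derivative on the right does not involve the dependence of q₁ on b₁. -/
open Finset

lemma abel_sum (a c : ℕ → ℝ) : ∀ n, 1 ≤ n →
    ∑ i ∈ Icc 1 n, a i * (c (i+1) - c i)
      = a n * c (n+1) - a 1 * c 1 - ∑ i ∈ Icc 2 n, (a i - a (i-1)) * c i := by
  intro n hn
  induction n with
  | zero => omega
  | succ k ih =>
    rcases eq_or_lt_of_le hn with h | h
    · have hk : k = 0 := by omega
      subst hk
      norm_num
      ring
    · have hk : 1 ≤ k := by omega
      rw [Finset.sum_Icc_succ_top (by omega : 1 ≤ k + 1),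
          Finset.sum_Icc_succ_top (by omega : 2 ≤ k + 1), ih hk]
      simp only [Nat.add_sub_cancel]
      ring

lemma icc_split (n : ℕ) (hn : 1 ≤ n) (g : ℕ → ℝ) :
    ∑ i ∈ Icc 1 n, g i = g 1 + ∑ i ∈ Icc 2 n, g i := by
  have h : Icc 1 n = insert 1 (Icc 2 n) := by
    ext x; simp only [mem_Icc, mem_insert]; omega
  rw [h, Finset.sum_insert (by simp)]

/-- Discrete Hamilton–Jacobi identity: along a family of solutions of the discrete Hamilton
equations with Lagrangian boundary conditions, the derivative of the on-shell discrete
action with respect to the boundary parameter `b₁` equals the explicit partial derivative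
`∂f₁/∂b₁(q₁, b₁)`. -/
theorem discrete_action_derivative (N : ℕ) (hN : 2 ≤ N) (m ε : ℝ) (hm : m ≠ 0) (hε : 0 < ε)
    (V : ℝ → ℝ) (hV : ContDiff ℝ 2 V)
    (f₁ f₂ : ℝ → ℝ → ℝ)
    (hf₁ : ContDiff ℝ 2 (fun x : ℝ × ℝ => f₁ x.1 x.2))
    (hf₂ : ContDiff ℝ 2 (fun x : ℝ × ℝ => f₂ x.1 x.2))
    (b₂ : ℝ)
    (p q : ℝ → ℕ → ℝ)
    (hp : ∀ i, Differentiable ℝ (fun b => p b i))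
    (hq : ∀ i, Differentiable ℝ (fun b => q b i))
    (ham1 : ∀ b, ∀ i, 1 ≤ i → i ≤ N - 1 → q b (i + 1) - q b i = (ε / m) * p b i)
    (ham2 : ∀ b, ∀ i, 2 ≤ i → i ≤ N - 1 → p b i - p b (i - 1) = -ε * deriv V (q b i))
    (hbc1 : ∀ b, p b 1 + ε * deriv V (q b 1) = deriv (fun x => f₁ x b) (q b 1))
    (hbc2 : ∀ b, p b (N - 1) = deriv (fun x => f₂ x b₂) (q b N))
    (Sd : ℝ → ℝ)
    (hSd : ∀ b, Sd b = (∑ i ∈ Finset.Icc 1 (N - 1), p b i * (q b (i + 1) - q b i))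
      - ε * (∑ i ∈ Finset.Icc 1 (N - 1), ((p b i) ^ 2 / (2 * m) + V (q b i)))
      + f₁ (q b 1) b - f₂ (q b N) b₂)
    (b : ℝ) :
    deriv Sd b = deriv (fun c => f₁ (q b 1) c) b := by
  -- notation
  set p' : ℕ → ℝ := fun i => deriv (fun c => p c i) b with hp'
  set q' : ℕ → ℝ := fun i => deriv (fun c => q c i) b with hq'
  have hVd : Differentiable ℝ V := hV.differentiable (by norm_num)
  have hF₁ : Differentiable ℝ (fun x : ℝ × ℝ => f₁ x.1 x.2) :=
    hf₁.differentiable (by norm_num)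
  have hF₂ : Differentiable ℝ (fun x : ℝ × ℝ => f₂ x.1 x.2) :=
    hf₂.differentiable (by norm_num)
  set L : ℝ × ℝ →L[ℝ] ℝ := fderiv ℝ (fun x : ℝ × ℝ => f₁ x.1 x.2) (q b 1, b) with hL
  -- derivative of c ↦ f₁ (q c 1) c
  have hcurve : HasDerivAt (fun c : ℝ => ((q c 1, c) : ℝ × ℝ)) (q' 1, 1) b :=
    ((hq 1 b).hasDerivAt).prodMk (hasDerivAt_id b)
  have hF1at : HasFDerivAt (fun x : ℝ × ℝ => f₁ x.1 x.2) L (q b 1, b) :=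
    (hF₁ (q b 1, b)).hasFDerivAt
  have h3 : HasDerivAt (fun c => f₁ (q c 1) c) (L (q' 1, 1)) b := by
    have := hF1at.comp_hasDerivAt_of_eq b hcurve rfl
    exact this
  -- partial derivatives of f₁
  have hpart1 : deriv (fun x => f₁ x b) (q b 1) = L (1, 0) := by
    have : HasDerivAt (fun x => f₁ x b) (L (1, 0)) (q b 1) := by
      have hc : HasDerivAt (fun x : ℝ => ((x, b) : ℝ × ℝ)) (1, 0) (q b 1) :=
        (hasDerivAt_id _).prodMk (hasDerivAt_const _ _)
      have := hF1at.comp_hasDerivAt_of_eq _ hc rfl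
      exact this
    exact this.deriv
  have hpart2 : deriv (fun c => f₁ (q b 1) c) b = L (0, 1) := by
    have : HasDerivAt (fun c => f₁ (q b 1) c) (L (0, 1)) b := by
      have hc : HasDerivAt (fun c : ℝ => ((q b 1, c) : ℝ × ℝ)) (0, 1) b :=
        (hasDerivAt_const _ _).prodMk (hasDerivAt_id _)
      have := hF1at.comp_hasDerivAt_of_eq _ hc rfl
      exact this
    exact this.deriv
  have hLlin : L (q' 1, 1) = q' 1 * L (1, 0) + L (0, 1) := by
    have : ((q' 1, 1) : ℝ × ℝ) = q' 1 • ((1, 0) : ℝ × ℝ) + ((0, 1) : ℝ × ℝ) := by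
      simp [Prod.ext_iff]
    rw [this, map_add, map_smul]; simp
  -- f₂ part
  have hG : Differentiable ℝ (fun x => f₂ x b₂) := by
    intro x
    exact (hF₂ (x, b₂)).comp x (((differentiableAt_fun_id).prodMk (differentiableAt_const b₂) :
      DifferentiableAt ℝ (fun y : ℝ => ((y, b₂) : ℝ × ℝ)) x))
  have h4 : HasDerivAt (fun c => f₂ (q c N) b₂)
      (deriv (fun x => f₂ x b₂) (q b N) * q' N) b :=
    ((hG (q b N)).hasDerivAt).comp (h₂ := fun x => f₂ x b₂) b ((hq N b).hasDerivAt)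
  -- sums
  have h1 : HasDerivAt (fun c => ∑ i ∈ Finset.Icc 1 (N - 1), p c i * (q c (i + 1) - q c i))
      (∑ i ∈ Finset.Icc 1 (N - 1),
        (p' i * (q b (i + 1) - q b i) + p b i * (q' (i + 1) - q' i))) b := by
    apply HasDerivAt.fun_sum
    intro i _
    exact ((hp i b).hasDerivAt).mul (((hq (i + 1) b).hasDerivAt).sub ((hq i b).hasDerivAt))
  have h2 : HasDerivAt (fun c => ∑ i ∈ Finset.Icc 1 (N - 1), ((p c i) ^ 2 / (2 * m) + V (q c i)))
      (∑ i ∈ Finset.Icc 1 (N - 1),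
        ((2 : ℕ) * p b i ^ 1 * p' i / (2 * m) + deriv V (q b i) * q' i)) b := by
    apply HasDerivAt.fun_sum
    intro i _
    exact ((((hp i b).hasDerivAt).pow 2).div_const (2 * m)).add
      (((hVd (q b i)).hasDerivAt).comp b ((hq i b).hasDerivAt))
  -- total derivative
  have hSfun : Sd = fun c => (∑ i ∈ Finset.Icc 1 (N - 1), p c i * (q c (i + 1) - q c i))
      - ε * (∑ i ∈ Finset.Icc 1 (N - 1), ((p c i) ^ 2 / (2 * m) + V (q c i)))
      + f₁ (q c 1) c - f₂ (q c N) b₂ := funext hSd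
  have hStotal : HasDerivAt Sd
      ((∑ i ∈ Finset.Icc 1 (N - 1),
          (p' i * (q b (i + 1) - q b i) + p b i * (q' (i + 1) - q' i)))
        - ε * (∑ i ∈ Finset.Icc 1 (N - 1),
          ((2 : ℕ) * p b i ^ 1 * p' i / (2 * m) + deriv V (q b i) * q' i))
        + L (q' 1, 1) - deriv (fun x => f₂ x b₂) (q b N) * q' N) b := by
    rw [hSfun]
    exact ((h1.sub (h2.const_mul ε)).add h3).sub h4
  rw [hStotal.deriv, hpart2]
  -- now the algebraic identity
  have hN1 : 1 ≤ N - 1 := by omega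
  -- split sums
  rw [Finset.sum_add_distrib, Finset.sum_add_distrib]
  -- rewrite first pieces via ham1
  have e1 : ∑ i ∈ Finset.Icc 1 (N - 1), p' i * (q b (i + 1) - q b i)
      = ε * ∑ i ∈ Finset.Icc 1 (N - 1), 1 / m * (p b i * p' i) := by
    rw [Finset.mul_sum]
    apply Finset.sum_congr rfl
    intro i hi
    rw [Finset.mem_Icc] at hi
    rw [ham1 b i hi.1 hi.2]; ring
  have e2 : ∑ i ∈ Finset.Icc 1 (N - 1), (2 : ℕ) * p b i ^ 1 * p' i / (2 * m)
      = ∑ i ∈ Finset.Icc 1 (N - 1), (1 / m) * (p b i * p' i) := by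
    apply Finset.sum_congr rfl
    intro i _
    field_simp
    ring
  -- Abel summation on second piece
  have e3 : ∑ i ∈ Finset.Icc 1 (N - 1), p b i * (q' (i + 1) - q' i)
      = p b (N - 1) * q' (N - 1 + 1) - p b 1 * q' 1
        - ∑ i ∈ Finset.Icc 2 (N - 1), (p b i - p b (i - 1)) * q' i :=
    abel_sum (p b) q' (N - 1) hN1
  have e4 : ∑ i ∈ Finset.Icc 2 (N - 1), (p b i - p b (i - 1)) * q' i
      = -(ε * ∑ i ∈ Finset.Icc 2 (N - 1), deriv V (q b i) * q' i) := by
    rw [Finset.mul_sum, ← Finset.sum_neg_distrib]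
    apply Finset.sum_congr rfl
    intro i hi
    rw [Finset.mem_Icc] at hi
    rw [ham2 b i hi.1 hi.2]; ring
  have e5 : ∑ i ∈ Finset.Icc 1 (N - 1), deriv V (q b i) * q' i
      = deriv V (q b 1) * q' 1 + ∑ i ∈ Finset.Icc 2 (N - 1), deriv V (q b i) * q' i :=
    icc_split (N - 1) hN1 _
  have hNq : N - 1 + 1 = N := by omega
  rw [e1, e2, e3, e4, e5, hLlin, hpart1.symm, ← hbc1 b, ← hbc2 b, hNq]
  ring
end

section
/- Let y(t) solve −y'' − (1/m)V''(q_c(t))·y = 0 on [0,T] with y(0) = 1, y'(0) = a₁/m, where q_c(t;q) is a smooth family of solutions of m q̈ = −V'(q_c) with q_c(0) = q, q̇_c(0) = (1/m)∂f₁/∂q(q,b₁), and a₁ = ∂²f₁/∂q²(q,b₁). Then y(t) = ∂q_c(t)/∂q, and hence ẏ(T) − (a₂/m)y(T) = ∂q̇_c(T)/∂q − (a₂/m)·∂q_c(T)/∂q. -/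
open Set

private lemma second_order_zero (c w : ℝ → ℝ) (hc : Continuous c)
    (hw : Differentiable ℝ w) (hw' : Differentiable ℝ (deriv w))
    (hode : ∀ t, deriv (deriv w) t = c t * w t)
    (h0 : w 0 = 0) (h0' : deriv w 0 = 0) : ∀ t, w t = 0 := by
  intro τ
  set a : ℝ := -(|τ| + 1) with ha
  set b : ℝ := |τ| + 1 with hb
  have hab : a < b := by
    have := abs_nonneg τ; simp only [ha, hb]; linarith
  obtain ⟨C, hC⟩ := (isCompact_Icc (a := a) (b := b)).exists_bound_of_continuousOn
    hc.continuousOn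
  set k : ℝ → ℝ := fun t => c (max a (min t b)) with hk
  have hkc : ∀ t ∈ Icc a b, k t = c t := by
    intro t ht
    simp only [hk]
    rw [min_eq_left ht.2, max_eq_right ht.1]
  have hkb : ∀ t, |k t| ≤ max C 1 := by
    intro t
    have hm : max a (min t b) ∈ Icc a b := by
      constructor
      · exact le_max_left _ _
      · exact max_le hab.le (min_le_right _ _)
    exact le_trans (hC _ hm) (le_max_left _ _)
  set K : NNReal := (max C 1).toNNReal with hK
  have hKc : (K : ℝ) = max C 1 := Real.coe_toNNReal _ (le_trans zero_le_one (le_max_right _ _))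
  set v : ℝ → ℝ × ℝ → ℝ × ℝ := fun t p => (p.2, k t * p.1) with hv_def
  have hv : ∀ t, LipschitzOnWith K (v t) univ := by
    intro t
    apply LipschitzWith.lipschitzOnWith
    apply LipschitzWith.of_dist_le_mul
    intro p p'
    rw [Prod.dist_eq]
    apply max_le
    · calc dist (v t p).1 (v t p').1 = dist p.2 p'.2 := rfl
        _ ≤ dist p p' := by rw [Prod.dist_eq]; exact le_max_right _ _
        _ ≤ K * dist p p' := by
            nlinarith [hKc, dist_nonneg (x := p) (y := p'), le_max_right C 1]
    · calc dist (v t p).2 (v t p').2 = |k t| * dist p.1 p'.1 := by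
            simp [hv_def, Real.dist_eq, ← mul_sub, abs_mul]
        _ ≤ (max C 1) * dist p p' := by
            apply mul_le_mul (hkb t) (by rw [Prod.dist_eq]; exact le_max_left _ _) dist_nonneg
            exact le_trans (abs_nonneg _) (hkb t)
        _ = K * dist p p' := by rw [hKc]
  set f : ℝ → ℝ × ℝ := fun t => (w t, deriv w t) with hf_def
  have hf' : ∀ t ∈ Ioo a b, HasDerivAt f (v t (f t)) t := by
    intro t ht
    have h1 : HasDerivAt w (deriv w t) t := (hw t).hasDerivAt
    have h2 : HasDerivAt (deriv w) (deriv (deriv w) t) t := (hw' t).hasDerivAt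
    have : v t (f t) = (deriv w t, deriv (deriv w) t) := by
      simp [hv_def, hf_def, hode t, hkc t (Ioo_subset_Icc_self ht), mul_comm]
    rw [this]
    exact h1.prodMk h2
  have hg' : ∀ t ∈ Ioo a b, HasDerivAt (fun _ : ℝ => ((0 : ℝ), (0 : ℝ))) (v t ((0 : ℝ), (0 : ℝ))) t := by
    intro t ht
    have : v t ((0 : ℝ), (0 : ℝ)) = (0, 0) := by simp [hv_def]
    rw [this]
    exact hasDerivAt_const t _
  have h0mem : (0 : ℝ) ∈ Ioo a b := by
    constructor <;> [skip; skip] <;> · have := abs_nonneg τ; simp only [ha, hb]; linarith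
  have heq : f 0 = (0, 0) := by simp [hf_def, h0, h0']
  have := ODE_solution_unique_of_mem_Icc (v := v) (s := fun _ => univ) (K := K) (fun t _ => hv t) h0mem
    (Continuous.continuousOn (hw.continuous.prodMk hw'.continuous))
    hf' (fun _ _ => mem_univ _)
    continuousOn_const hg' (fun _ _ => mem_univ _) heq
  have hτ : τ ∈ Icc a b := by
    constructor <;> · have h1 := abs_nonneg τ; have h2 := le_abs_self τ;
                      have h3 := neg_abs_le τ; simp only [ha, hb]; linarith
  have := this hτ
  exact congrArg Prod.fst this

private lemma partial_fst (G : ℝ × ℝ → ℝ) (hG : Differentiable ℝ G) (t r : ℝ) :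
    HasDerivAt (fun s => G (s, r)) (fderiv ℝ G (t, r) (1, 0)) t := by
  have h1 : HasDerivAt (fun s : ℝ => (s, r)) ((1 : ℝ), (0 : ℝ)) t :=
    (hasDerivAt_id t).prodMk (hasDerivAt_const t r)
  exact (hG (t, r)).hasFDerivAt.comp_hasDerivAt t h1

private lemma partial_snd (G : ℝ × ℝ → ℝ) (hG : Differentiable ℝ G) (t r : ℝ) :
    HasDerivAt (fun ρ => G (t, ρ)) (fderiv ℝ G (t, r) (0, 1)) r := by
  have h1 : HasDerivAt (fun ρ : ℝ => (t, ρ)) ((0 : ℝ), (1 : ℝ)) r :=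
    (hasDerivAt_const r t).prodMk (hasDerivAt_id r)
  exact (hG (t, r)).hasFDerivAt.comp_hasDerivAt r h1

private lemma swap_fderiv (G : ℝ × ℝ → ℝ) (hG : ContDiff ℝ 3 G) (p v w : ℝ × ℝ) :
    fderiv ℝ (fun x => fderiv ℝ G x v) p w = fderiv ℝ (fun x => fderiv ℝ G x w) p v := by
  have hdf : Differentiable ℝ (fderiv ℝ G) :=
    (hG.fderiv_right (m := 2) (by norm_num)).differentiable (by norm_num)
  have hsymm := (hG.contDiffAt (x := p)).isSymmSndFDerivAt (by norm_num)
  have e : ∀ u : ℝ × ℝ, fderiv ℝ (fun x => fderiv ℝ G x u) p =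
      (ContinuousLinearMap.apply ℝ ℝ u).comp (fderiv ℝ (fderiv ℝ G) p) :=
    fun u => (((ContinuousLinearMap.apply ℝ ℝ u).hasFDerivAt).comp p (hdf p).hasFDerivAt).fderiv
  rw [e v, e w]
  simp only [ContinuousLinearMap.coe_comp', Function.comp_apply,
    ContinuousLinearMap.apply_apply]
  exact hsymm w v
/-- The Gelfand–Yaglom solution `y` of the Jacobi equation with mixed initial conditions
is exactly the derivative of the classical trajectory with respect to the initial position,
hence `ẏ(T) - (a₂/m) y(T) = ∂q̇_c(T)/∂q - (a₂/m) ∂q_c(T)/∂q`. -/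
theorem gy_solution_eq_variation (m T a₂ : ℝ) (hm : m ≠ 0) (hT : 0 < T)
    (V f₁ : ℝ → ℝ) (hV : ContDiff ℝ 2 V) (hf₁ : ContDiff ℝ 2 f₁)
    (qc : ℝ → ℝ → ℝ)
    (hsm : ContDiff ℝ (⊤ : ℕ∞) (fun x : ℝ × ℝ => qc x.1 x.2))
    (hode : ∀ t r, m * deriv (deriv (fun s => qc s r)) t = -(deriv V (qc t r)))
    (h0 : ∀ r, qc 0 r = r)
    (h0' : ∀ r, deriv (fun s => qc s r) 0 = (1 / m) * deriv f₁ r)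
    (q : ℝ) (y : ℝ → ℝ) (hy : ContDiff ℝ 2 y)
    (hjac : ∀ t, -(deriv (deriv y) t) - (1 / m) * deriv (deriv V) (qc t q) * y t = 0)
    (hy0 : y 0 = 1) (hy0' : deriv y 0 = deriv (deriv f₁) q / m) :
    (∀ t, y t = deriv (fun r => qc t r) q) ∧
    deriv y T - (a₂ / m) * y T =
      deriv (fun r => deriv (fun s => qc s r) T) q - (a₂ / m) * deriv (fun r => qc T r) q := by
  set F : ℝ × ℝ → ℝ := fun x => qc x.1 x.2 with hF_def
  have hF3 : ContDiff ℝ 3 F := hsm.of_le (WithTop.coe_le_coe.mpr le_top)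
  have hFd : Differentiable ℝ F := hF3.differentiable (by norm_num)
  set Dt : ℝ × ℝ → ℝ := fun p => fderiv ℝ F p (1, 0) with hDt_def
  set Dr : ℝ × ℝ → ℝ := fun p => fderiv ℝ F p (0, 1) with hDr_def
  have hF' : ContDiff ℝ 3 (fderiv ℝ F) := (hsm.fderiv_right (m := 3) (WithTop.coe_le_coe.mpr le_top))
  have hDt : ContDiff ℝ 3 Dt := hF'.clm_apply contDiff_const
  have hDr : ContDiff ℝ 3 Dr := hF'.clm_apply contDiff_const
  have hDtd : Differentiable ℝ Dt := hDt.differentiable (by norm_num)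
  have hDrd : Differentiable ℝ Dr := hDr.differentiable (by norm_num)
  set Dtt : ℝ × ℝ → ℝ := fun p => fderiv ℝ Dt p (1, 0) with hDtt_def
  set M : ℝ × ℝ → ℝ := fun p => fderiv ℝ Dt p (0, 1) with hM_def
  have hDt' : ContDiff ℝ 2 (fderiv ℝ Dt) := (hDt.fderiv_right (m := 2) (by norm_num))
  have hDttd : Differentiable ℝ Dtt :=
    (hDt'.clm_apply contDiff_const).differentiable (by norm_num)
  have hMd : Differentiable ℝ M :=
    (hDt'.clm_apply contDiff_const).differentiable (by norm_num)
  -- derivatives of V, f₁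
  have hV1 : ContDiff ℝ 1 (deriv V) := by
    have : ContDiff ℝ (1 + 1) V := by exact_mod_cast hV
    exact (contDiff_succ_iff_deriv.mp this).2.2
  have hVd : ∀ x, HasDerivAt (deriv V) (deriv (deriv V) x) x :=
    fun x => ((hV1.differentiable (by norm_num)) x).hasDerivAt
  have hf₁1 : ContDiff ℝ 1 (deriv f₁) := by
    have : ContDiff ℝ (1 + 1) f₁ := by exact_mod_cast hf₁
    exact (contDiff_succ_iff_deriv.mp this).2.2
  -- basic partial-derivative facts
  have hqt : ∀ t r, HasDerivAt (fun s => qc s r) (Dt (t, r)) t :=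
    fun t r => partial_fst F hFd t r
  have hqr : ∀ t r, HasDerivAt (fun ρ => qc t ρ) (Dr (t, r)) r :=
    fun t r => partial_snd F hFd t r
  have hD1 : ∀ t r, deriv (fun s => qc s r) t = Dt (t, r) := fun t r => (hqt t r).deriv
  have hdd : ∀ t r, deriv (deriv (fun s => qc s r)) t = Dtt (t, r) := by
    intro t r
    have : deriv (fun s => qc s r) = fun s => Dt (s, r) := funext fun s => hD1 s r
    rw [this]
    exact (partial_fst Dt hDtd t r).deriv
  have hDtt_eq : ∀ t r, Dtt (t, r) = -(1 / m) * deriv V (qc t r) := by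
    intro t r
    have h := hode t r
    rw [hdd t r] at h
    field_simp at h ⊢
    linarith
  -- the variation z
  set z : ℝ → ℝ := fun t => Dr (t, q) with hz_def
  have hz_eq : ∀ t, z t = deriv (fun r => qc t r) q := fun t => ((hqr t q).deriv).symm
  have hswapF : ∀ p : ℝ × ℝ, fderiv ℝ Dr p (1, 0) = M p := by
    intro p
    rw [hDr_def, hM_def]
    exact swap_fderiv F hF3 p (0, 1) (1, 0)
  have hz' : ∀ t, HasDerivAt z (M (t, q)) t := by
    intro t
    have := partial_fst Dr hDrd t q
    rwa [hswapF (t, q)] at this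
  have hzderiv : ∀ t, deriv z t = M (t, q) := fun t => (hz' t).deriv
  have hM_eq : ∀ t, M (t, q) = deriv (fun r => deriv (fun s => qc s r) t) q := by
    intro t
    have h1 : (fun r => deriv (fun s => qc s r) t) = fun r => Dt (t, r) :=
      funext fun r => hD1 t r
    rw [h1]
    exact ((partial_snd Dt hDtd t q).deriv).symm
  have hswapDt : ∀ p : ℝ × ℝ, fderiv ℝ M p (1, 0) = fderiv ℝ Dtt p (0, 1) := by
    intro p
    rw [hM_def, hDtt_def]
    exact swap_fderiv Dt hDt p (0, 1) (1, 0)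
  have hz'' : ∀ t, deriv (deriv z) t = fderiv ℝ Dtt (t, q) (0, 1) := by
    intro t
    have h1 : deriv z = fun t => M (t, q) := funext hzderiv
    rw [h1]
    have := partial_fst M hMd t q
    rw [hswapDt (t, q)] at this
    exact this.deriv
  set c : ℝ → ℝ := fun t => -((1 / m) * deriv (deriv V) (qc t q)) with hc_def
  have hzODE : ∀ t, deriv (deriv z) t = c t * z t := by
    intro t
    rw [hz'' t]
    have h1 : (fun r => Dtt (t, r)) = fun r => -(1 / m) * deriv V (qc t r) :=
      funext fun r => hDtt_eq t r
    have h2 : HasDerivAt (fun r => deriv V (qc t r))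
        (deriv (deriv V) (qc t q) * Dr (t, q)) q := (hVd (qc t q)).comp q (hqr t q)
    have h3 : HasDerivAt (fun r => -(1 / m) * deriv V (qc t r))
        (-(1 / m) * (deriv (deriv V) (qc t q) * Dr (t, q))) q := h2.const_mul _
    have h4 : HasDerivAt (fun r => Dtt (t, r)) (fderiv ℝ Dtt (t, q) (0, 1)) q :=
      partial_snd Dtt hDttd t q
    rw [h1] at h4
    have := h4.unique h3
    rw [this, hc_def, hz_def]
    ring
  -- initial conditions for z
  have hz0 : z 0 = 1 := by
    rw [hz_eq 0]
    have : (fun r => qc 0 r) = fun r => r := funext h0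
    rw [this, deriv_id'']
  have hz0' : deriv z 0 = deriv (deriv f₁) q / m := by
    rw [hzderiv 0, hM_eq 0]
    have h1 : (fun r => deriv (fun s => qc s r) 0) = fun r => (1 / m) * deriv f₁ r :=
      funext h0'
    rw [h1]
    have hD : HasDerivAt (fun r => 1 / m * deriv f₁ r)
        ((1 / m) * deriv (deriv f₁) q) q :=
      ((hf₁1.differentiable (by norm_num) q).hasDerivAt).const_mul (1 / m)
    rw [hD.deriv]
    ring
  -- y satisfies the same ODE
  have hyODE : ∀ t, deriv (deriv y) t = c t * y t := by
    intro t
    have := hjac t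
    rw [hc_def]
    ring_nf
    ring_nf at this
    linarith
  -- regularity of w = y - z
  have hy2 : ContDiff ℝ (1 + 1) y := by exact_mod_cast hy
  have hyd : Differentiable ℝ y := hy2.differentiable (by norm_num)
  have hyd' : Differentiable ℝ (deriv y) :=
    (contDiff_succ_iff_deriv.mp hy2).2.2.differentiable (by norm_num)
  have hzd : Differentiable ℝ z :=
    fun t => ((hz' t).differentiableAt : DifferentiableAt ℝ z t)
  have hzd' : Differentiable ℝ (deriv z) := by
    have h1 : deriv z = fun t => M (t, q) := funext hzderiv
    rw [h1]
    intro t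
    exact (partial_fst M hMd t q).differentiableAt
  set w : ℝ → ℝ := fun t => y t - z t with hw_def
  have hwd : Differentiable ℝ w := hyd.sub hzd
  have hwderiv : deriv w = fun t => deriv y t - deriv z t :=
    funext fun t => deriv_sub (hyd t) (hzd t)
  have hwd' : Differentiable ℝ (deriv w) := by rw [hwderiv]; exact hyd'.sub hzd'
  have hwODE : ∀ t, deriv (deriv w) t = c t * w t := by
    intro t
    rw [hwderiv, deriv_fun_sub (hyd' t) (hzd' t), hyODE t, hzODE t, hw_def]
    ring
  have hcont : Continuous c := by
    have h1 : Continuous (deriv (deriv V)) := by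
      have : ContDiff ℝ (0 + 1) (deriv V) := by exact_mod_cast hV1
      exact (contDiff_succ_iff_deriv.mp this).2.2.continuous
    have h2 : Continuous fun t => qc t q :=
      hF3.continuous.comp (continuous_id.prodMk continuous_const)
    exact (continuous_const.mul (h1.comp h2)).neg
  have hw0 : w 0 = 0 := by rw [hw_def]; simp [hy0, hz0]
  have hw0' : deriv w 0 = 0 := by rw [hwderiv]; simp [hy0', hz0']
  have hzero : ∀ t, w t = 0 := second_order_zero c w hcont hwd hwd' hwODE hw0 hw0'
  have hyz : ∀ t, y t = z t := fun t => sub_eq_zero.mp (hzero t)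
  constructor
  · intro t
    rw [hyz t, hz_eq t]
  · have hyzf : y = z := funext hyz
    rw [hyzf, hzderiv T, hM_eq T, hz_eq T]
end

section
/- Suppose q_c(t; b₁, b₂) and p_c(t; b₁, b₂) form a smooth family of solutions of Hamilton's equations for H = p²/(2m) + V(q) on [0,T] with boundary conditions p_c(0) = ∂f₁/∂q(q_c(0), b₁), p_c(T) = ∂f₂/∂q'(q_c(T), b₂), and define S(b₁,b₂) = ∫₀ᵀ (p_c q̇_c − H(p_c,q_c)) dt + f₁(q_c(0),b₁) − f₂(q_c(T),b₂). Then ∂S/∂b₁ = ∂f₁/∂b₁(q_c(0), b₁) (explicit partial derivative only) and ∂²S/∂b₁∂b₂ = (∂²f₁/∂q∂b₁)·(∂q_c(0)/∂b₂). -/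
open Metric MeasureTheory intervalIntegral

open Metric

/-- derivative in first coordinate of a two-variable function. -/
lemma HJ_hd1 {G : ℝ × ℝ → ℝ} {x y : ℝ} (hG : DifferentiableAt ℝ G (x, y)) :
    HasDerivAt (fun c => G (c, y)) (fderiv ℝ G (x, y) (1, 0)) x :=
  hG.hasFDerivAt.comp_hasDerivAt x ((hasDerivAt_id x).prodMk (hasDerivAt_const x y))

lemma HJ_hd2 {G : ℝ × ℝ → ℝ} {x y : ℝ} (hG : DifferentiableAt ℝ G (x, y)) :
    HasDerivAt (fun t => G (x, t)) (fderiv ℝ G (x, y) (0, 1)) y :=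
  hG.hasFDerivAt.comp_hasDerivAt y ((hasDerivAt_const y x).prodMk (hasDerivAt_id y))

lemma HJ_clm (φ : ℝ × ℝ →L[ℝ] ℝ) (u v : ℝ) :
    φ (u, v) = u * φ (1, 0) + v * φ (0, 1) := by
  have h : (u, v) = u • ((1:ℝ), (0:ℝ)) + v • ((0:ℝ), (1:ℝ)) := by simp
  rw [h, φ.map_add, φ.map_smul, φ.map_smul, smul_eq_mul, smul_eq_mul]
open Metric

lemma HJ_fderiv_contdiff1 {G : ℝ × ℝ → ℝ} (hG : ContDiff ℝ 2 G) :
    ContDiff ℝ 1 (fderiv ℝ G) :=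
  hG.fderiv_right (by norm_num)

/-- deriv in var 1 of the partial derivative in var 2. -/
lemma HJ_mixed21 {G : ℝ × ℝ → ℝ} (hG : ContDiff ℝ 2 G) (x y : ℝ) :
    HasDerivAt (fun c => fderiv ℝ G (c, y) (0, 1))
      (fderiv ℝ (fderiv ℝ G) (x, y) (1, 0) (0, 1)) x := by
  have h1 : HasDerivAt (fun c => fderiv ℝ G (c, y))
      (fderiv ℝ (fderiv ℝ G) (x, y) (1, 0)) x :=
    ((HJ_fderiv_contdiff1 hG).differentiable one_ne_zero (x, y)).hasFDerivAt.comp_hasDerivAt x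
      ((hasDerivAt_id x).prodMk (hasDerivAt_const x y))
  have h2 := h1.clm_apply (hasDerivAt_const x ((0:ℝ), (1:ℝ)))
  simpa using h2

/-- deriv in var 2 of the partial derivative in var 1 (uses symmetry of 2nd derivative). -/
lemma HJ_mixed12 {G : ℝ × ℝ → ℝ} (hG : ContDiff ℝ 2 G) (x y : ℝ) :
    HasDerivAt (fun t => fderiv ℝ G (x, t) (1, 0))
      (fderiv ℝ (fderiv ℝ G) (x, y) (1, 0) (0, 1)) y := by
  have h1 : HasDerivAt (fun t => fderiv ℝ G (x, t))
      (fderiv ℝ (fderiv ℝ G) (x, y) (0, 1)) y :=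
    ((HJ_fderiv_contdiff1 hG).differentiable one_ne_zero (x, y)).hasFDerivAt.comp_hasDerivAt y
      ((hasDerivAt_const y x).prodMk (hasDerivAt_id y))
  have h2 := h1.clm_apply (hasDerivAt_const y ((1:ℝ), (0:ℝ)))
  have hsymm : fderiv ℝ (fderiv ℝ G) (x, y) (0, 1) (1, 0)
      = fderiv ℝ (fderiv ℝ G) (x, y) (1, 0) (0, 1) :=
    second_derivative_symmetric (fun z => (hG.differentiable two_ne_zero z).hasFDerivAt)
      ((HJ_fderiv_contdiff1 hG).differentiable one_ne_zero (x, y)).hasFDerivAt _ _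
  simpa [hsymm] using h2

lemma HJ_cont_pd1 {G : ℝ × ℝ → ℝ} (hG : ContDiff ℝ 2 G) :
    Continuous (fun p : ℝ × ℝ => fderiv ℝ G p (1, 0)) :=
  (HJ_fderiv_contdiff1 hG).continuous.clm_apply continuous_const

theorem HJ_key (m T : ℝ) (hm : m ≠ 0)
    (V : ℝ → ℝ) (hV : ContDiff ℝ 2 V)
    (f₁ f₂ : ℝ → ℝ → ℝ)
    (hf₁ : ContDiff ℝ 2 (fun x : ℝ × ℝ => f₁ x.1 x.2))
    (hf₂ : ContDiff ℝ 2 (fun x : ℝ × ℝ => f₂ x.1 x.2))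
    (qc pc : ℝ → ℝ → ℝ → ℝ)
    (hqc : ContDiff ℝ (⊤ : ℕ∞) (fun x : ℝ × ℝ × ℝ => qc x.1 x.2.1 x.2.2))
    (hpc : ContDiff ℝ (⊤ : ℕ∞) (fun x : ℝ × ℝ × ℝ => pc x.1 x.2.1 x.2.2))
    (ham1 : ∀ b₁ b₂ t, deriv (qc b₁ b₂) t = pc b₁ b₂ t / m)
    (ham2 : ∀ b₁ b₂ t, deriv (pc b₁ b₂) t = -(deriv V (qc b₁ b₂ t)))
    (hbc1 : ∀ b₁ b₂, pc b₁ b₂ 0 = deriv (fun x => f₁ x b₁) (qc b₁ b₂ 0))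
    (hbc2 : ∀ b₁ b₂, pc b₁ b₂ T = deriv (fun x => f₂ x b₂) (qc b₁ b₂ T))
    (S : ℝ → ℝ → ℝ)
    (hS : ∀ b₁ b₂, S b₁ b₂ = (∫ t in (0:ℝ)..T,
        (pc b₁ b₂ t * deriv (qc b₁ b₂) t - ((pc b₁ b₂ t) ^ 2 / (2 * m) + V (qc b₁ b₂ t))))
      + f₁ (qc b₁ b₂ 0) b₁ - f₂ (qc b₁ b₂ T) b₂)
    (a d : ℝ) :
    HasDerivAt (fun c => S c d) (deriv (fun c' => f₁ (qc a d 0) c') a) a := by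
  -- two-variable versions (second parameter fixed to d)
  set Q : ℝ × ℝ → ℝ := fun p => qc p.1 d p.2 with hQdef
  set P : ℝ × ℝ → ℝ := fun p => pc p.1 d p.2 with hPdef
  have hemb : ContDiff ℝ (⊤ : ℕ∞) (fun p : ℝ × ℝ => (p.1, d, p.2)) :=
    contDiff_fst.prodMk (contDiff_const.prodMk contDiff_snd)
  have hQ : ContDiff ℝ 2 Q := (hqc.comp hemb).of_le (WithTop.coe_le_coe.mpr le_top)
  have hP : ContDiff ℝ 2 P := (hpc.comp hemb).of_le (WithTop.coe_le_coe.mpr le_top)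
  set Qc : ℝ × ℝ → ℝ := fun p => fderiv ℝ Q p (1, 0) with hQcdef
  set Pc : ℝ × ℝ → ℝ := fun p => fderiv ℝ P p (1, 0) with hPcdef
  set L : ℝ → ℝ → ℝ := fun c t => P (c, t) ^ 2 / (2 * m) - V (Q (c, t)) with hLdef
  set D : ℝ → ℝ → ℝ :=
    fun c t => P (c, t) * Pc (c, t) / m - deriv V (Q (c, t)) * Qc (c, t) with hDdef
  have hVd : Differentiable ℝ V := hV.differentiable two_ne_zero
  -- rewrite S using L
  have hSL : ∀ c, S c d = (∫ t in (0:ℝ)..T, L c t) + f₁ (Q (c, 0)) c - f₂ (Q (c, T)) d := by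
    intro c
    rw [hS]
    have heq : (∫ t in (0:ℝ)..T,
        (pc c d t * deriv (qc c d) t - ((pc c d t) ^ 2 / (2 * m) + V (qc c d t))))
        = ∫ t in (0:ℝ)..T, L c t := by
      apply intervalIntegral.integral_congr
      intro t _
      simp only [ham1, hLdef]
      field_simp
      ring
    rw [heq]
  -- derivative of L in the parameter
  have hDL : ∀ x t, HasDerivAt (fun c => L c t) (D x t) x := by
    intro x t
    have hP1 : HasDerivAt (fun c => P (c, t)) (Pc (x, t)) x :=
      HJ_hd1 (hP.differentiable two_ne_zero (x, t))
    have hQ1 : HasDerivAt (fun c => Q (c, t)) (Qc (x, t)) x :=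
      HJ_hd1 (hQ.differentiable two_ne_zero (x, t))
    have hV1 : HasDerivAt V (deriv V (Q (x, t))) (Q (x, t)) := (hVd _).hasDerivAt
    have h := ((hP1.pow 2).div_const (2 * m)).sub (hV1.comp x hQ1)
    refine h.congr_deriv (Eq.symm ?_)
    simp only [hDdef, pow_one, Nat.cast_ofNat]
    rw [mul_assoc, mul_div_mul_left _ _ (two_ne_zero)]
    norm_num
  -- continuity facts
  have hQcont : Continuous Q := hQ.continuous
  have hPcont : Continuous P := hP.continuous
  have hQccont : Continuous Qc := HJ_cont_pd1 hQ
  have hPccont : Continuous Pc := HJ_cont_pd1 hP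
  have hV'cont : Continuous (deriv V) := by
    have : ContDiff ℝ 1 (deriv V) := (contDiff_succ_iff_deriv.mp (by norm_num [hV] : ContDiff ℝ (1+1) V)).2.2
    exact this.continuous
  have hDcont2 : Continuous (fun p : ℝ × ℝ => D p.1 p.2) := by
    simp only [hDdef]
    exact ((hPcont.mul hPccont).div_const m).sub ((hV'cont.comp hQcont).mul hQccont)
  have hLcont2 : Continuous (fun p : ℝ × ℝ => L p.1 p.2) := by
    simp only [hLdef]
    exact ((hPcont.pow 2).div_const (2 * m)).sub (hV.continuous.comp hQcont)
  have hDcont : ∀ c, Continuous (fun t => D c t) := fun c =>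
    hDcont2.comp (continuous_const.prodMk continuous_id)
  have hLcont : ∀ c, Continuous (fun t => L c t) := fun c =>
    hLcont2.comp (continuous_const.prodMk continuous_id)
  -- FTC : t-derivative of P·Qc equals D (Hamilton + Clairaut)
  have hFTC : ∀ c t, HasDerivAt (fun s => P (c, s) * Qc (c, s)) (D c t) t := by
    intro c t
    have hPt : HasDerivAt (fun s => P (c, s)) (-(deriv V (Q (c, t)))) t := by
      have h1 : DifferentiableAt ℝ (fun s => P (c, s)) t :=
        (HJ_hd2 (hP.differentiable two_ne_zero (c, t))).differentiableAt
      have h2 := h1.hasDerivAt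
      have h3 : deriv (fun s => P (c, s)) t = -(deriv V (Q (c, t))) := by
        have he : (fun s => P (c, s)) = pc c d := rfl
        rw [he]
        exact ham2 c d t
      rwa [h3] at h2
    have hval : fderiv ℝ (fderiv ℝ Q) (c, t) (1, 0) (0, 1) = Pc (c, t) / m := by
      have h21 := HJ_mixed21 hQ c t
      have hfun : (fun x => fderiv ℝ Q (x, t) (0, 1)) = fun x => pc x d t / m := by
        funext x
        have h := (HJ_hd2 (hQ.differentiable two_ne_zero (x, t))).deriv
        rw [← h]
        have he : (fun s => Q (x, s)) = qc x d := rfl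
        rw [he, ham1]
      rw [hfun] at h21
      have hdirect : HasDerivAt (fun x => pc x d t / m) (Pc (c, t) / m) c :=
        (HJ_hd1 (hP.differentiable two_ne_zero (c, t))).div_const m
      exact h21.unique hdirect
    have hQct : HasDerivAt (fun s => Qc (c, s)) (Pc (c, t) / m) t := by
      have := HJ_mixed12 hQ c t
      rwa [hval] at this
    have hprod := hPt.mul hQct
    refine hprod.congr_deriv (Eq.symm ?_)
    simp only [hDdef]
    ring
  have hIval : ∀ c, (∫ t in (0:ℝ)..T, D c t) = P (c, T) * Qc (c, T) - P (c, 0) * Qc (c, 0) := by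
    intro c
    exact intervalIntegral.integral_eq_sub_of_hasDerivAt (fun t _ => hFTC c t)
      ((hDcont c).intervalIntegrable 0 T)
  -- differentiation under the integral sign
  obtain ⟨C, hC⟩ := ((isCompact_closedBall a 1).prod isCompact_uIcc).exists_bound_of_continuousOn
    (f := fun p : ℝ × ℝ => D p.1 p.2) hDcont2.continuousOn
  have hInt : HasDerivAt (fun x => ∫ t in (0:ℝ)..T, L x t) (∫ t in (0:ℝ)..T, D a t) a := by
    have h := intervalIntegral.hasDerivAt_integral_of_dominated_loc_of_deriv_le
      (F := L) (F' := D) (x₀ := a) (bound := fun _ => C) (a := 0) (b := T) (μ := volume)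
      (ball_mem_nhds a zero_lt_one)
      (Filter.Eventually.of_forall fun x => ((hLcont x).aestronglyMeasurable))
      ((hLcont a).intervalIntegrable 0 T)
      ((hDcont a).aestronglyMeasurable)
      (Filter.Eventually.of_forall fun t ht x hx => by
        exact hC (x, t) ⟨ball_subset_closedBall hx, Set.uIoc_subset_uIcc ht⟩)
      (intervalIntegrable_const)
      (Filter.Eventually.of_forall fun t ht x hx => hDL x t)
    exact h.2
  -- boundary terms
  have hB1 : HasDerivAt (fun c => f₁ (Q (c, 0)) c)
      (P (a, 0) * Qc (a, 0) + deriv (fun c' => f₁ (qc a d 0) c') a) a := by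
    have hinner : HasDerivAt (fun c => ((Q (c, 0) : ℝ), (c : ℝ))) ((Qc (a, 0), 1)) a :=
      (HJ_hd1 (hQ.differentiable two_ne_zero (a, 0))).prodMk (hasDerivAt_id a)
    have hcomp := (hf₁.differentiable two_ne_zero ((Q (a, 0)), a)).hasFDerivAt.comp_hasDerivAt_of_eq
      a hinner rfl
    have hv := HJ_clm (fderiv ℝ (fun x : ℝ × ℝ => f₁ x.1 x.2) (Q (a, 0), a)) (Qc (a, 0)) 1
    have h10 : fderiv ℝ (fun x : ℝ × ℝ => f₁ x.1 x.2) (Q (a, 0), a) (1, 0) = P (a, 0) := by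
      have h := (HJ_hd1 (hf₁.differentiable two_ne_zero ((Q (a, 0)), a))).deriv
      rw [← h]
      exact (hbc1 a d).symm
    have h01 : fderiv ℝ (fun x : ℝ × ℝ => f₁ x.1 x.2) (Q (a, 0), a) (0, 1)
        = deriv (fun c' => f₁ (qc a d 0) c') a := by
      exact ((HJ_hd2 (hf₁.differentiable two_ne_zero ((Q (a, 0)), a))).deriv).symm
    rw [hv, h10, h01, one_mul, mul_comm] at hcomp
    exact hcomp
  have hB2 : HasDerivAt (fun c => f₂ (Q (c, T)) d) (P (a, T) * Qc (a, T)) a := by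
    have hinner : HasDerivAt (fun c => ((Q (c, T) : ℝ), (d : ℝ))) ((Qc (a, T), 0)) a :=
      (HJ_hd1 (hQ.differentiable two_ne_zero (a, T))).prodMk (hasDerivAt_const a d)
    have hcomp := (hf₂.differentiable two_ne_zero ((Q (a, T)), d)).hasFDerivAt.comp_hasDerivAt_of_eq
      a hinner rfl
    have hv := HJ_clm (fderiv ℝ (fun x : ℝ × ℝ => f₂ x.1 x.2) (Q (a, T), d)) (Qc (a, T)) 0
    have h10 : fderiv ℝ (fun x : ℝ × ℝ => f₂ x.1 x.2) (Q (a, T), d) (1, 0) = P (a, T) := by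
      have h := (HJ_hd1 (hf₂.differentiable two_ne_zero ((Q (a, T)), d))).deriv
      rw [← h]
      exact (hbc2 a d).symm
    rw [hv, h10, zero_mul, add_zero, mul_comm] at hcomp
    exact hcomp
  -- assemble
  have hSfun : (fun c => S c d)
      = fun c => (∫ t in (0:ℝ)..T, L c t) + f₁ (Q (c, 0)) c - f₂ (Q (c, T)) d := funext hSL
  rw [hSfun]
  have htotal := (hInt.add hB1).sub hB2
  refine htotal.congr_deriv (Eq.symm ?_)
  rw [hIval a]
  ring



/-- Continuum Hamilton–Jacobi identity for the action with Lagrangian boundary terms: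
`∂S/∂b₁ = ∂f₁/∂b₁(q_c(0), b₁)` and
`∂²S/∂b₁∂b₂ = (∂²f₁/∂q∂b₁)(q_c(0)) · ∂q_c(0)/∂b₂`. -/
theorem onshell_action_derivatives (m T : ℝ) (hm : m ≠ 0) (hT : 0 < T)
    (V : ℝ → ℝ) (hV : ContDiff ℝ 2 V)
    (f₁ f₂ : ℝ → ℝ → ℝ)
    (hf₁ : ContDiff ℝ 2 (fun x : ℝ × ℝ => f₁ x.1 x.2))
    (hf₂ : ContDiff ℝ 2 (fun x : ℝ × ℝ => f₂ x.1 x.2))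
    (qc pc : ℝ → ℝ → ℝ → ℝ)
    (hqc : ContDiff ℝ (⊤ : ℕ∞) (fun x : ℝ × ℝ × ℝ => qc x.1 x.2.1 x.2.2))
    (hpc : ContDiff ℝ (⊤ : ℕ∞) (fun x : ℝ × ℝ × ℝ => pc x.1 x.2.1 x.2.2))
    (ham1 : ∀ b₁ b₂ t, deriv (qc b₁ b₂) t = pc b₁ b₂ t / m)
    (ham2 : ∀ b₁ b₂ t, deriv (pc b₁ b₂) t = -(deriv V (qc b₁ b₂ t)))
    (hbc1 : ∀ b₁ b₂, pc b₁ b₂ 0 = deriv (fun x => f₁ x b₁) (qc b₁ b₂ 0))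
    (hbc2 : ∀ b₁ b₂, pc b₁ b₂ T = deriv (fun x => f₂ x b₂) (qc b₁ b₂ T))
    (S : ℝ → ℝ → ℝ)
    (hS : ∀ b₁ b₂, S b₁ b₂ = (∫ t in (0:ℝ)..T,
        (pc b₁ b₂ t * deriv (qc b₁ b₂) t - ((pc b₁ b₂ t) ^ 2 / (2 * m) + V (qc b₁ b₂ t))))
      + f₁ (qc b₁ b₂ 0) b₁ - f₂ (qc b₁ b₂ T) b₂)
    (b₁ b₂ : ℝ) :
    deriv (fun c => S c b₂) b₁ = deriv (fun c => f₁ (qc b₁ b₂ 0) c) b₁ ∧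
    deriv (fun c₂ => deriv (fun c₁ => S c₁ c₂) b₁) b₂ =
      deriv (fun x => deriv (fun c => f₁ x c) b₁) (qc b₁ b₂ 0) *
        deriv (fun c₂ => qc b₁ c₂ 0) b₂ := by
  constructor
  · exact (HJ_key m T hm V hV f₁ f₂ hf₁ hf₂ qc pc hqc hpc ham1 ham2 hbc1 hbc2 S hS b₁ b₂).deriv
  · have hfun : (fun c₂ => deriv (fun c₁ => S c₁ c₂) b₁)
        = fun c₂ => deriv (fun c => f₁ (qc b₁ c₂ 0) c) b₁ := by
      funext c₂
      exact (HJ_key m T hm V hV f₁ f₂ hf₁ hf₂ qc pc hqc hpc ham1 ham2 hbc1 hbc2 S hS b₁ c₂).deriv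
    rw [hfun]
    have hGdiff : DifferentiableAt ℝ (fun x => deriv (fun c => f₁ x c) b₁) (qc b₁ b₂ 0) := by
      have hGeq : (fun x => deriv (fun c => f₁ x c) b₁)
          = fun x => fderiv ℝ (fun p : ℝ × ℝ => f₁ p.1 p.2) (x, b₁) (0, 1) := by
        funext x
        exact (HJ_hd2 (hf₁.differentiable two_ne_zero (x, b₁))).deriv
      rw [hGeq]
      have h1 : ContDiff ℝ 1 (fun x : ℝ => fderiv ℝ (fun p : ℝ × ℝ => f₁ p.1 p.2) (x, b₁)) :=
        (HJ_fderiv_contdiff1 hf₁).comp (contDiff_id.prodMk contDiff_const)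
      exact ((h1.differentiable one_ne_zero) (qc b₁ b₂ 0)).clm_apply (differentiableAt_const _)
    have hinner : DifferentiableAt ℝ (fun c₂ => qc b₁ c₂ 0) b₂ := by
      have h2 : ContDiff ℝ (⊤ : ℕ∞) (fun c₂ : ℝ => qc b₁ c₂ 0) :=
        hqc.comp (contDiff_const.prodMk (contDiff_id.prodMk contDiff_const))
      exact h2.differentiable (by simp) b₂
    exact deriv_comp b₂ hGdiff hinner
end

section
/- Let ε > 0, T > 0, N ≥ 2 with ε = T/(N−1), and let A_N(ε) be the N×N tridiagonal matrix with off-diagonal entries −1/ε, (A_N)_{11} = a₁/m + 1/ε − (ε/m)V''(q_c(t₁)), (A_N)_{jj} = 2/ε − (ε/m)V''(q_c(t_j)) for 2 ≤ j ≤ N−1, and (A_N)_{NN} = −a₂/m + 1/ε, where t_j = (j−1)ε. Then for x, y ∈ C²([0,T]) satisfying x'(0) = (a₁/m)x(0) and x'(T) = (a₂/m)x(T), with X_N = (x(t₁),…,x(t_N))ᵀ and Y_N = (y(t₁),…,y(t_N))ᵀ, one has lim_{N→∞} Y_Nᵀ A_N(ε) X_N = ∫₀ᵀ y(t)·(−x''(t)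 − (1/m)V''(q_c(t))x(t)) dt. -/
open Finset Filter Set intervalIntegral


/-- Entries of the discrete Jacobi matrix, as a function of natural indices. -/
noncomputable def auxA (m a₁ a₂ ε : ℝ) (w : ℕ → ℝ) (N j k : ℕ) : ℝ :=
  if j + 1 = k ∨ k + 1 = j then -1 / ε
  else if j = k then
    (if j = 0 then a₁ / m + 1 / ε - (ε / m) * w j
     else if j = N - 1 then -a₂ / m + 1 / ε
     else 2 / ε - (ε / m) * w j)
  else 0

lemma auxA_stable (m a₁ a₂ ε : ℝ) (w : ℕ → ℝ) {N j k : ℕ} (hN : 2 ≤ N)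
    (hj : j < N) (hk : k < N) (hjk : ¬(j = N - 1 ∧ k = N - 1)) :
    auxA m a₁ a₂ ε w (N + 1) j k = auxA m a₁ a₂ ε w N j k := by
  unfold auxA
  by_cases h1 : j + 1 = k ∨ k + 1 = j
  · simp [h1]
  · by_cases h2 : j = k
    · subst h2
      simp only [h1, if_false, if_true]
      by_cases h0 : j = 0
      · simp [h0]
      · have hj1 : j ≠ N - 1 := fun h => hjk ⟨h, h⟩
        have hj2 : j ≠ (N + 1) - 1 := by omega
        simp [h0, hj1, hj2, Nat.ne_of_lt hj]
    · simp [h1, h2]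

lemma sum_identity (m a₁ a₂ ε : ℝ) (w : ℕ → ℝ) (u v : ℕ → ℝ) :
    ∀ N : ℕ, 2 ≤ N →
      (∑ j ∈ range N, ∑ k ∈ range N, u j * auxA m a₁ a₂ ε w N j k * v k) =
        (1 / ε) * ∑ j ∈ range (N - 1), (u (j+1) - u j) * (v (j+1) - v j)
          - (ε / m) * ∑ j ∈ range (N - 1), w j * (u j * v j)
          + (a₁ / m) * (u 0 * v 0) - (a₂ / m) * (u (N-1) * v (N-1)) := by
  intro N hN
  induction N, hN using Nat.le_induction with
  | base =>
    simp only [Finset.sum_range_succ, Finset.sum_range_zero, Finset.sum_range_one]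
    unfold auxA
    norm_num
    ring
  | succ N hN ih =>
    have hN1 : N - 1 + 1 = N := by omega
    have hN2 : N + 1 - 1 = N := by omega
    -- the inner (N+1)-sum splits, then the outer sum splits
    have hsplit : (∑ j ∈ range (N+1), ∑ k ∈ range (N+1),
        u j * auxA m a₁ a₂ ε w (N+1) j k * v k)
        = (∑ j ∈ range N, ∑ k ∈ range N, u j * auxA m a₁ a₂ ε w (N+1) j k * v k)
          + (∑ j ∈ range N, u j * auxA m a₁ a₂ ε w (N+1) j N * v N)
          + (∑ k ∈ range N, u N * auxA m a₁ a₂ ε w (N+1) N k * v k)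
          + u N * auxA m a₁ a₂ ε w (N+1) N N * v N := by
      rw [Finset.sum_range_succ]
      rw [Finset.sum_range_succ (fun k => u N * auxA m a₁ a₂ ε w (N+1) N k * v k)]
      rw [Finset.sum_congr rfl (fun j hj => Finset.sum_range_succ
        (fun k => u j * auxA m a₁ a₂ ε w (N+1) j k * v k) N)]
      rw [Finset.sum_add_distrib]
      ring
    -- the N×N block equals the old sum plus a correction at (N-1,N-1)
    have hblock : (∑ j ∈ range N, ∑ k ∈ range N, u j * auxA m a₁ a₂ ε w (N+1) j k * v k)
        = (∑ j ∈ range N, ∑ k ∈ range N, u j * auxA m a₁ a₂ ε w N j k * v k)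
          + u (N-1) * ((2 / ε - (ε / m) * w (N-1)) - (-a₂ / m + 1 / ε)) * v (N-1) := by
      have hdiff : (∑ j ∈ range N, ∑ k ∈ range N,
          (u j * auxA m a₁ a₂ ε w (N+1) j k * v k - u j * auxA m a₁ a₂ ε w N j k * v k))
          = u (N-1) * ((2 / ε - (ε / m) * w (N-1)) - (-a₂ / m + 1 / ε)) * v (N-1) := by
        rw [Finset.sum_eq_single_of_mem (N-1) (by simp; omega)]
        · rw [Finset.sum_eq_single_of_mem (N-1) (by simp; omega)]
          · have e1 : auxA m a₁ a₂ ε w (N+1) (N-1) (N-1) = 2 / ε - (ε / m) * w (N-1) := by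
              unfold auxA
              have : ¬(N - 1 + 1 = N - 1 ∨ N - 1 + 1 = N - 1) := by omega
              have h0 : N - 1 ≠ 0 := by omega
              have h2 : N - 1 ≠ (N+1) - 1 := by omega
              have h2' : N - 1 ≠ N := by omega
              simp [this, h0, h2, h2']
            have e2 : auxA m a₁ a₂ ε w N (N-1) (N-1) = -a₂ / m + 1 / ε := by
              unfold auxA
              have : ¬(N - 1 + 1 = N - 1 ∨ N - 1 + 1 = N - 1) := by omega
              have h0 : N - 1 ≠ 0 := by omega
              simp [this, h0]
            rw [e1, e2]; ring
          · intro k hk hkne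
            have : auxA m a₁ a₂ ε w (N+1) (N-1) k = auxA m a₁ a₂ ε w N (N-1) k :=
              auxA_stable m a₁ a₂ ε w hN (by omega) (Finset.mem_range.mp hk)
                (fun h => hkne h.2)
            rw [this]; ring
        · intro j hj hjne
          have : ∀ k ∈ range N,
              u j * auxA m a₁ a₂ ε w (N+1) j k * v k - u j * auxA m a₁ a₂ ε w N j k * v k = 0 := by
            intro k hk
            have : auxA m a₁ a₂ ε w (N+1) j k = auxA m a₁ a₂ ε w N j k :=
              auxA_stable m a₁ a₂ ε w hN (Finset.mem_range.mp hj) (Finset.mem_range.mp hk)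
                (fun h => hjne h.1)
            rw [this]; ring
          exact Finset.sum_eq_zero this
      have := Finset.sum_congr rfl (fun j (hj : j ∈ range N) => Finset.sum_sub_distrib
        (f := fun k => u j * auxA m a₁ a₂ ε w (N+1) j k * v k)
        (g := fun k => u j * auxA m a₁ a₂ ε w N j k * v k) (s := range N))
      rw [this, Finset.sum_sub_distrib] at hdiff
      linarith [hdiff]
    -- the new row and column
    have hrow : (∑ j ∈ range N, u j * auxA m a₁ a₂ ε w (N+1) j N * v N)
        = u (N-1) * (-1/ε) * v N := by
      rw [Finset.sum_eq_single_of_mem (N-1) (by simp; omega)]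
      · congr 2
        unfold auxA
        have : N - 1 + 1 = N ∨ N + 1 = N - 1 := Or.inl hN1
        simp [this]
      · intro j hj hjne
        have : auxA m a₁ a₂ ε w (N+1) j N = 0 := by
          unfold auxA
          have h1 : ¬(j + 1 = N ∨ N + 1 = j) := by
            have := Finset.mem_range.mp hj; omega
          have h2 : j ≠ N := by have := Finset.mem_range.mp hj; omega
          simp [h1, h2]
        rw [this]; ring
    have hcol : (∑ k ∈ range N, u N * auxA m a₁ a₂ ε w (N+1) N k * v k)
        = u N * (-1/ε) * v (N-1) := by
      rw [Finset.sum_eq_single_of_mem (N-1) (by simp; omega)]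
      · congr 2
        unfold auxA
        have : N = N - 1 + 1 ∨ N - 1 + 1 = N := Or.inr hN1
        simp [hN1]
      · intro k hk hkne
        have : auxA m a₁ a₂ ε w (N+1) N k = 0 := by
          unfold auxA
          have h1 : ¬(N + 1 = k ∨ k + 1 = N) := by
            have := Finset.mem_range.mp hk; omega
          have h2 : N ≠ k := by have := Finset.mem_range.mp hk; omega
          simp [h1, h2]
        rw [this]; ring
    have hcorner : auxA m a₁ a₂ ε w (N+1) N N = -a₂ / m + 1 / ε := by
      unfold auxA
      have h1 : ¬(N + 1 = N ∨ N + 1 = N) := by omega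
      have h0 : N ≠ 0 := by omega
      simp [h1, h0]
    rw [hsplit, hblock, hrow, hcol, hcorner, ih]
    -- split RHS range N sums as range (N-1) + last
    simp only [hN2]
    rw [show (range N) = range ((N-1)+1) by rw [hN1],
      Finset.sum_range_succ (fun j => (u (j+1) - u j) * (v (j+1) - v j)),
      Finset.sum_range_succ (fun j => w j * (u j * v j)), hN1]
    ring


/-- Tagged Riemann sums (with two independent tags per cell) of a product of two
functions continuous on `[0,T]` converge to the integral. -/
lemma riemann_two_tag (T : ℝ) (hT : 0 < T) (g h : ℝ → ℝ)
    (hg : ContinuousOn g (Set.Icc 0 T)) (hh : ContinuousOn h (Set.Icc 0 T))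
    (F : ℕ → ℝ)
    (hF : ∀ N : ℕ, 2 ≤ N → ∃ σ τ : ℕ → ℝ,
      (∀ j < N - 1, σ j ∈ Set.Icc ((j : ℝ) * (T / ((N : ℝ) - 1))) (((j : ℝ) + 1) * (T / ((N : ℝ) - 1)))
        ∧ τ j ∈ Set.Icc ((j : ℝ) * (T / ((N : ℝ) - 1))) (((j : ℝ) + 1) * (T / ((N : ℝ) - 1)))) ∧
      F N = ∑ j ∈ Finset.range (N - 1), (T / ((N : ℝ) - 1)) * (g (σ j) * h (τ j))) :
    Tendsto F atTop (nhds (∫ t in (0:ℝ)..T, g t * h t)) := by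
  -- bounds
  obtain ⟨Mg, hMg⟩ := isCompact_Icc.exists_bound_of_continuousOn hg
  obtain ⟨Mh, hMh⟩ := isCompact_Icc.exists_bound_of_continuousOn hh
  set M : ℝ := max 1 (max Mg Mh) with hM
  have hM1 : (1:ℝ) ≤ M := le_max_left _ _
  have hM0 : (0:ℝ) < M := lt_of_lt_of_le one_pos hM1
  have hgM : ∀ t ∈ Set.Icc (0:ℝ) T, |g t| ≤ M := fun t ht =>
    le_trans (hMg t ht) (le_trans (le_max_left _ _) (le_max_right _ _))
  have hhM : ∀ t ∈ Set.Icc (0:ℝ) T, |h t| ≤ M := fun t ht =>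
    le_trans (hMh t ht) (le_trans (le_max_right _ _) (le_max_right _ _))
  -- uniform continuity
  have hgu := (isCompact_Icc.uniformContinuousOn_of_continuous hg)
  have hhu := (isCompact_Icc.uniformContinuousOn_of_continuous hh)
  rw [Metric.uniformContinuousOn_iff] at hgu hhu
  rw [Metric.tendsto_atTop]
  intro δ hδ
  set e : ℝ := δ / (4 * M * T) with he
  have he0 : 0 < e := by positivity
  obtain ⟨δ₁, hδ₁0, hδ₁⟩ := hgu e he0
  obtain ⟨δ₂, hδ₂0, hδ₂⟩ := hhu e he0
  -- mesh goes to zero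
  have hmesh : Tendsto (fun N : ℕ => T / ((N : ℝ) - 1)) atTop (nhds 0) := by
    apply Tendsto.div_atTop (tendsto_const_nhds)
    exact tendsto_atTop_add_const_right _ (-1) tendsto_natCast_atTop_atTop
  have hev : ∀ᶠ N : ℕ in atTop, T / ((N : ℝ) - 1) < min δ₁ δ₂ :=
    hmesh.eventually (gt_mem_nhds (lt_min hδ₁0 hδ₂0))
  obtain ⟨N₀, hN₀⟩ := eventually_atTop.mp hev
  refine ⟨max N₀ 2, fun N hN => ?_⟩
  have hN2 : 2 ≤ N := le_trans (le_max_right _ _) hN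
  have hNN₀ : N₀ ≤ N := le_trans (le_max_left _ _) hN
  set ε : ℝ := T / ((N : ℝ) - 1) with hε
  have hNR : (1:ℝ) ≤ (N : ℝ) - 1 := by
    have : (2:ℝ) ≤ (N : ℝ) := by exact_mod_cast hN2
    linarith
  have hNR0 : (0:ℝ) < (N : ℝ) - 1 := lt_of_lt_of_le one_pos hNR
  have hε0 : 0 < ε := div_pos hT hNR0
  have hεδ : ε < min δ₁ δ₂ := hN₀ N hNN₀
  have hNT : ((N : ℝ) - 1) * ε = T := by rw [hε]; field_simp
  -- points of the partition lie in [0,T]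
  have hpt : ∀ j : ℕ, j ≤ N - 1 → (j : ℝ) * ε ∈ Set.Icc (0:ℝ) T := by
    intro j hj
    have hjR : (j : ℝ) ≤ (N : ℝ) - 1 := by
      have : (j : ℝ) ≤ ((N - 1 : ℕ) : ℝ) := by exact_mod_cast hj
      rwa [Nat.cast_sub (by omega), Nat.cast_one] at this
    constructor
    · positivity
    · calc (j : ℝ) * ε ≤ ((N : ℝ) - 1) * ε := by nlinarith
        _ = T := hNT
  have hIcc : ∀ j : ℕ, j < N - 1 → Set.Icc ((j:ℝ)*ε) (((j:ℝ)+1)*ε) ⊆ Set.Icc (0:ℝ) T := by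
    intro j hj
    apply Set.Icc_subset_Icc (hpt j (by omega)).1
    have : ((j:ℝ)+1) = ((j+1 : ℕ) : ℝ) := by push_cast; ring
    rw [this]
    exact (hpt (j+1) (by omega)).2
  obtain ⟨σ, τ, htags, hFN⟩ := hF N hN2
  -- integrability on subintervals
  have hint : ∀ k < N - 1, IntervalIntegrable (fun t => g t * h t) MeasureTheory.volume
      ((k:ℝ)*ε) ((k+1:ℕ)*ε) := by
    intro k hk
    apply ContinuousOn.intervalIntegrable
    apply (hg.mul hh).mono
    rw [Set.uIcc_of_le (by push_cast; nlinarith)]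
    have : ((k+1:ℕ):ℝ)*ε = ((k:ℝ)+1)*ε := by push_cast; ring
    rw [this]
    exact hIcc k hk
  have hsum := intervalIntegral.sum_integral_adjacent_intervals
    (a := fun j : ℕ => (j : ℝ) * ε) (n := N - 1) (f := fun t => g t * h t)
    (μ := MeasureTheory.volume) (by
      intro k hk
      have : ((k+1:ℕ):ℝ) * ε = ((k:ℝ)+1) * ε := by push_cast; ring
      simpa [this] using hint k hk)
  have hend : ((N - 1 : ℕ) : ℝ) * ε = T := by
    rw [Nat.cast_sub (by omega), Nat.cast_one]; exact hNT
  simp only [Nat.cast_zero, zero_mul, hend] at hsum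
  -- rewrite F N - integral as a sum of per-cell errors
  rw [hFN]
  rw [Real.dist_eq]
  have hdecomp : (∑ j ∈ Finset.range (N - 1), ε * (g (σ j) * h (τ j)))
      - (∫ t in (0:ℝ)..T, g t * h t)
      = ∑ j ∈ Finset.range (N - 1),
          (∫ t in ((j:ℝ)*ε)..(((j:ℝ)+1)*ε), (g (σ j) * h (τ j) - g t * h t)) := by
    rw [← hsum, ← Finset.sum_sub_distrib]
    apply Finset.sum_congr rfl
    intro j hj
    have hj' := Finset.mem_range.mp hj
    have hlen : ((j:ℝ)+1)*ε - (j:ℝ)*ε = ε := by ring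
    have hcast : ((j+1:ℕ):ℝ) * ε = ((j:ℝ)+1) * ε := by push_cast; ring
    rw [hcast]
    rw [intervalIntegral.integral_sub (by simp) (by
      have := hint j hj'; rwa [hcast] at this)]
    congr 1
    rw [intervalIntegral.integral_const]
    rw [hlen]; simp [smul_eq_mul]
  rw [hdecomp]
  -- bound each term
  have hbound : ∀ j ∈ Finset.range (N - 1),
      |∫ t in ((j:ℝ)*ε)..(((j:ℝ)+1)*ε), (g (σ j) * h (τ j) - g t * h t)| ≤ (2*M*e) * ε := by
    intro j hj
    have hj' := Finset.mem_range.mp hj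
    obtain ⟨hσj, hτj⟩ := htags j hj'
    have hσT : σ j ∈ Set.Icc (0:ℝ) T := hIcc j hj' hσj
    have hτT : τ j ∈ Set.Icc (0:ℝ) T := hIcc j hj' hτj
    have key : ∀ t ∈ Set.uIoc ((j:ℝ)*ε) (((j:ℝ)+1)*ε),
        ‖g (σ j) * h (τ j) - g t * h t‖ ≤ 2*M*e := by
      intro t ht
      rw [Set.uIoc_of_le (by nlinarith)] at ht
      have htI : t ∈ Set.Icc ((j:ℝ)*ε) (((j:ℝ)+1)*ε) := Set.Ioc_subset_Icc_self ht
      have htT : t ∈ Set.Icc (0:ℝ) T := hIcc j hj' htI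
      have hdσ : dist (σ j) t < δ₁ := by
        have := Real.dist_le_of_mem_Icc hσj htI
        have hstep : ((j:ℝ)+1)*ε - (j:ℝ)*ε = ε := by ring
        rw [hstep] at this
        exact lt_of_le_of_lt this (lt_of_lt_of_le hεδ (min_le_left _ _))
      have hdτ : dist (τ j) t < δ₂ := by
        have := Real.dist_le_of_mem_Icc hτj htI
        have hstep : ((j:ℝ)+1)*ε - (j:ℝ)*ε = ε := by ring
        rw [hstep] at this
        exact lt_of_le_of_lt this (lt_of_lt_of_le hεδ (min_le_right _ _))
      have hge : |g (σ j) - g t| ≤ e := le_of_lt (by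
        have := hδ₁ (σ j) hσT t htT hdσ
        rwa [Real.dist_eq] at this)
      have hhe : |h (τ j) - h t| ≤ e := le_of_lt (by
        have := hδ₂ (τ j) hτT t htT hdτ
        rwa [Real.dist_eq] at this)
      have expand : g (σ j) * h (τ j) - g t * h t
          = g (σ j) * (h (τ j) - h t) + (g (σ j) - g t) * h t := by ring
      rw [Real.norm_eq_abs, expand]
      calc |g (σ j) * (h (τ j) - h t) + (g (σ j) - g t) * h t|
          ≤ |g (σ j) * (h (τ j) - h t)| + |(g (σ j) - g t) * h t| := abs_add_le _ _
        _ = |g (σ j)| * |h (τ j) - h t| + |g (σ j) - g t| * |h t| := by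
            rw [abs_mul, abs_mul]
        _ ≤ M * e + e * M := by
            have h1 := hgM _ hσT
            have h2 := hhM _ htT
            have h3 : (0:ℝ) ≤ |g (σ j)| := abs_nonneg _
            have h4 : (0:ℝ) ≤ |h (τ j) - h t| := abs_nonneg _
            have h5 : (0:ℝ) ≤ |g (σ j) - g t| := abs_nonneg _
            have h6 : (0:ℝ) ≤ |h t| := abs_nonneg _
            nlinarith
        _ = 2*M*e := by ring
    have := intervalIntegral.norm_integral_le_of_norm_le_const
      (a := (j:ℝ)*ε) (b := ((j:ℝ)+1)*ε) (C := 2*M*e)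
      (f := fun t => g (σ j) * h (τ j) - g t * h t) key
    rw [Real.norm_eq_abs] at this
    have habs : |((j:ℝ)+1)*ε - (j:ℝ)*ε| = ε := by
      rw [show ((j:ℝ)+1)*ε - (j:ℝ)*ε = ε by ring]
      exact abs_of_pos hε0
    rwa [habs] at this
  calc |∑ j ∈ Finset.range (N - 1),
          (∫ t in ((j:ℝ)*ε)..(((j:ℝ)+1)*ε), (g (σ j) * h (τ j) - g t * h t))|
      ≤ ∑ j ∈ Finset.range (N - 1),
          |∫ t in ((j:ℝ)*ε)..(((j:ℝ)+1)*ε), (g (σ j) * h (τ j) - g t * h t)| :=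
        Finset.abs_sum_le_sum_abs _ _
    _ ≤ ∑ _j ∈ Finset.range (N - 1), (2*M*e) * ε := Finset.sum_le_sum hbound
    _ = ((N-1 : ℕ) : ℝ) * ((2*M*e) * ε) := by rw [Finset.sum_const, nsmul_eq_mul, Finset.card_range]
    _ = 2*M*e*T := by
        rw [Nat.cast_sub (by omega), Nat.cast_one]
        rw [show ((N:ℝ)-1) * (2*M*e*ε) = 2*M*e*(((N:ℝ)-1)*ε) by ring, hNT]
    _ = δ / 2 := by
        rw [he]; field_simp; ring
    _ < δ := by linarith


/-- Weak convergence of the discrete Jacobi operator `A_N(ε)` with Robin boundary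
modifications to `A = -d²/dt² - (1/m)V''(q_c(t))`: for `x` satisfying the mixed boundary
conditions, `Y_Nᵀ A_N X_N → ∫₀ᵀ y (A x) dt` as `N → ∞`, where `t_j = (j-1)ε`,
`ε = T/(N-1)`. -/
theorem discrete_jacobi_weak_convergence (T m a₁ a₂ : ℝ) (hT : 0 < T) (hm : m ≠ 0)
    (V qc : ℝ → ℝ)
    (hcont : ContinuousOn (fun t => deriv (deriv V) (qc t)) (Set.Icc 0 T))
    (x y : ℝ → ℝ) (hx : ContDiff ℝ 2 x) (hy : ContDiff ℝ 2 y)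
    (hbc0 : deriv x 0 = (a₁ / m) * x 0) (hbcT : deriv x T = (a₂ / m) * x T)
    (A : (N : ℕ) → Matrix (Fin N) (Fin N) ℝ)
    (hA : ∀ N : ℕ, A N = Matrix.of fun (j k : Fin N) =>
      if (j : ℕ) + 1 = (k : ℕ) ∨ (k : ℕ) + 1 = (j : ℕ) then -1 / (T / ((N : ℝ) - 1))
      else if j = k then
        (if (j : ℕ) = 0 then
          a₁ / m + 1 / (T / ((N : ℝ) - 1))
            - ((T / ((N : ℝ) - 1)) / m) * deriv (deriv V) (qc ((j : ℕ) * (T / ((N : ℝ) - 1))))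
         else if (j : ℕ) = N - 1 then -a₂ / m + 1 / (T / ((N : ℝ) - 1))
         else 2 / (T / ((N : ℝ) - 1))
            - ((T / ((N : ℝ) - 1)) / m) * deriv (deriv V) (qc ((j : ℕ) * (T / ((N : ℝ) - 1)))))
      else 0) :
    Filter.Tendsto (fun N : ℕ =>
        ∑ j : Fin N, ∑ k : Fin N,
          y ((j : ℕ) * (T / ((N : ℝ) - 1))) * A N j k * x ((k : ℕ) * (T / ((N : ℝ) - 1))))
      Filter.atTop
      (nhds (∫ t in (0:ℝ)..T,
        y t * (-(deriv (deriv x) t) - (1 / m) * deriv (deriv V) (qc t) * x t))) := by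
  -- basic smoothness facts
  have hx1 : ContDiff ℝ 1 (deriv x) := by
    have h2 : ContDiff ℝ ((1:ℕ) + 1) x := by exact_mod_cast hx
    exact (contDiff_succ_iff_deriv.mp h2).2.2
  have hy1 : ContDiff ℝ 1 (deriv y) := by
    have h2 : ContDiff ℝ ((1:ℕ) + 1) y := by exact_mod_cast hy
    exact (contDiff_succ_iff_deriv.mp h2).2.2
  have hdx : Continuous (deriv x) := hx1.continuous
  have hdy : Continuous (deriv y) := hy1.continuous
  have hddx : Continuous (deriv (deriv x)) := hx1.continuous_deriv le_rfl
  have hxdiff : Differentiable ℝ x := hx.differentiable (by norm_num)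
  have hydiff : Differentiable ℝ y := hy.differentiable (by norm_num)
  have hdxdiff : Differentiable ℝ (deriv x) := hx1.differentiable (by norm_num)
  set W : ℝ → ℝ := fun t => deriv (deriv V) (qc t) with hW
  set εf : ℕ → ℝ := fun N => T / ((N : ℝ) - 1) with hεf
  have hεpos : ∀ N : ℕ, 2 ≤ N → 0 < εf N := by
    intro N hN
    have : (2:ℝ) ≤ (N:ℝ) := by exact_mod_cast hN
    apply div_pos hT; linarith
  have hend : ∀ N : ℕ, 2 ≤ N → ((N - 1 : ℕ) : ℝ) * εf N = T := by
    intro N hN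
    have h2 : (2:ℝ) ≤ (N:ℝ) := by exact_mod_cast hN
    have hne : (N:ℝ) - 1 ≠ 0 := by linarith
    rw [Nat.cast_sub (by omega), Nat.cast_one, hεf]
    rw [mul_div_assoc', mul_comm, mul_div_assoc, div_self hne, mul_one]
  -- the two Riemann-sum components
  set F1 : ℕ → ℝ := fun N => (1 / εf N) *
    ∑ j ∈ range (N - 1), (y (((j+1:ℕ):ℝ) * εf N) - y ((j:ℝ) * εf N))
      * (x (((j+1:ℕ):ℝ) * εf N) - x ((j:ℝ) * εf N)) with hF1
  set F2 : ℕ → ℝ := fun N =>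
    ∑ j ∈ range (N - 1), εf N * (W ((j:ℝ) * εf N) * (y ((j:ℝ) * εf N) * x ((j:ℝ) * εf N)))
    with hF2
  -- Claim A : F1 → ∫ y' x', via the mean value theorem on each cell
  have claimA : Tendsto F1 atTop (nhds (∫ t in (0:ℝ)..T, deriv y t * deriv x t)) := by
    apply riemann_two_tag T hT (deriv y) (deriv x) (hdy.continuousOn) (hdx.continuousOn)
    intro N hN2
    have hε0 := hεpos N hN2
    have hmvtY : ∀ j : ℕ, j < N - 1 → ∃ c ∈ Set.Ioo ((j:ℝ) * εf N) (((j:ℝ)+1) * εf N),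
        deriv y c = (y (((j:ℝ)+1) * εf N) - y ((j:ℝ) * εf N))
          / (((j:ℝ)+1) * εf N - (j:ℝ) * εf N) := by
      intro j hj
      exact exists_hasDerivAt_eq_slope y (deriv y) (by nlinarith) hy.continuous.continuousOn
        (fun t _ => (hydiff t).hasDerivAt)
    have hmvtX : ∀ j : ℕ, j < N - 1 → ∃ c ∈ Set.Ioo ((j:ℝ) * εf N) (((j:ℝ)+1) * εf N),
        deriv x c = (x (((j:ℝ)+1) * εf N) - x ((j:ℝ) * εf N))
          / (((j:ℝ)+1) * εf N - (j:ℝ) * εf N) := by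
      intro j hj
      exact exists_hasDerivAt_eq_slope x (deriv x) (by nlinarith) hx.continuous.continuousOn
        (fun t _ => (hxdiff t).hasDerivAt)
    classical
    refine ⟨fun j => if hj : j < N - 1 then (hmvtY j hj).choose else 0,
            fun j => if hj : j < N - 1 then (hmvtX j hj).choose else 0, ?_, ?_⟩
    · intro j hj
      have hy' := Set.Ioo_subset_Icc_self (hmvtY j hj).choose_spec.1
      have hx' := Set.Ioo_subset_Icc_self (hmvtX j hj).choose_spec.1
      simp only [hεf] at hy' hx'
      constructor
      · simpa only [dif_pos hj] using hy'
      · simpa only [dif_pos hj] using hx'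
    · simp only [hF1, dif_pos, Finset.mul_sum]
      apply Finset.sum_congr rfl
      intro j hj
      have hj' := Finset.mem_range.mp hj
      rw [dif_pos hj', dif_pos hj']
      have hne : εf N ≠ 0 := ne_of_gt hε0
      have hYe : y (((j:ℝ)+1) * εf N) - y ((j:ℝ) * εf N)
          = deriv y ((hmvtY j hj').choose) * εf N := by
        rw [(hmvtY j hj').choose_spec.2]
        rw [show ((j:ℝ)+1) * εf N - (j:ℝ) * εf N = εf N from by ring]
        field_simp
      have hXe : x (((j:ℝ)+1) * εf N) - x ((j:ℝ) * εf N)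
          = deriv x ((hmvtX j hj').choose) * εf N := by
        rw [(hmvtX j hj').choose_spec.2]
        rw [show ((j:ℝ)+1) * εf N - (j:ℝ) * εf N = εf N from by ring]
        field_simp
      have hcast : ((j+1:ℕ):ℝ) = (j:ℝ) + 1 := by push_cast; ring
      have hεeq : T / ((N:ℝ) - 1) = εf N := rfl
      set cy := (hmvtY j hj').choose with hcy
      set cx := (hmvtX j hj').choose with hcx
      rw [hcast, hεeq, hYe, hXe]
      field_simp
  -- Claim B : F2 → ∫ W (y x), with left endpoints as tags
  have claimB : Tendsto F2 atTop (nhds (∫ t in (0:ℝ)..T, W t * (y t * x t))) := by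
    apply riemann_two_tag T hT W (fun t => y t * x t) hcont
      ((hy.continuous.mul hx.continuous).continuousOn)
    intro N hN2
    have hε0 := hεpos N hN2
    have hε0' : 0 < T / ((N:ℝ) - 1) := hε0
    refine ⟨fun j => (j:ℝ) * (T / ((N:ℝ) - 1)), fun j => (j:ℝ) * (T / ((N:ℝ) - 1)), ?_, rfl⟩
    intro j hj
    constructor <;> exact ⟨le_refl _, by nlinarith⟩
  -- combined limit
  have hcomb : Tendsto (fun N => F1 N - (1/m) * F2 N
      + ((a₁/m) * (y 0 * x 0) - (a₂/m) * (y T * x T))) atTop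
      (nhds ((∫ t in (0:ℝ)..T, deriv y t * deriv x t)
        - (1/m) * (∫ t in (0:ℝ)..T, W t * (y t * x t))
        + ((a₁/m) * (y 0 * x 0) - (a₂/m) * (y T * x T)))) :=
    (claimA.sub (claimB.const_mul (1/m))).add tendsto_const_nhds
  -- the limit equals the target integral (integration by parts, using the BCs)
  have hIBP : (∫ t in (0:ℝ)..T, y t * (-(deriv (deriv x) t) - (1 / m) * W t * x t))
      = (∫ t in (0:ℝ)..T, deriv y t * deriv x t)
        - (1/m) * (∫ t in (0:ℝ)..T, W t * (y t * x t))
        + ((a₁/m) * (y 0 * x 0) - (a₂/m) * (y T * x T)) := by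
    have hWint : IntervalIntegrable (fun t => W t * (y t * x t)) MeasureTheory.volume 0 T := by
      apply ContinuousOn.intervalIntegrable
      rw [Set.uIcc_of_le hT.le]
      exact hcont.mul (hy.continuous.mul hx.continuous).continuousOn
    have hyxint : IntervalIntegrable (fun t => y t * deriv (deriv x) t)
        MeasureTheory.volume 0 T := (hy.continuous.mul hddx).intervalIntegrable 0 T
    have hcongr : (∫ t in (0:ℝ)..T, y t * (-(deriv (deriv x) t) - (1 / m) * W t * x t))
        = ∫ t in (0:ℝ)..T,
            ((fun t => -(y t * deriv (deriv x) t)) t - (fun t => (1/m) * (W t * (y t * x t))) t) := by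
      apply intervalIntegral.integral_congr
      intro t _
      simp only
      ring
    have hneg : IntervalIntegrable (fun t => -(y t * deriv (deriv x) t))
        MeasureTheory.volume 0 T := hyxint.neg
    rw [hcongr, intervalIntegral.integral_sub hneg (hWint.const_mul (1/m)),
      intervalIntegral.integral_neg, intervalIntegral.integral_const_mul]
    have hparts : (∫ t in (0:ℝ)..T, y t * deriv (deriv x) t)
        = y T * deriv x T - y 0 * deriv x 0 - ∫ t in (0:ℝ)..T, deriv y t * deriv x t := by
      apply intervalIntegral.integral_mul_deriv_eq_deriv_mul
      · exact fun t _ => (hydiff t).hasDerivAt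
      · exact fun t _ => (hdxdiff t).hasDerivAt
      · exact hdy.intervalIntegrable 0 T
      · exact hddx.intervalIntegrable 0 T
    rw [hparts, hbc0, hbcT]
    ring
  rw [hIBP]
  -- eventual equality of the matrix quadratic form with the combination
  apply Tendsto.congr' _ hcomb
  filter_upwards [eventually_ge_atTop 2] with N hN2
  have hε0 := hεpos N hN2
  have hconv : (∑ j : Fin N, ∑ k : Fin N,
      y ((j : ℕ) * εf N) * A N j k * x ((k : ℕ) * εf N))
      = ∑ j ∈ range N, ∑ k ∈ range N,
          y ((j:ℝ) * εf N) * auxA m a₁ a₂ (εf N) (fun i => W ((i:ℝ) * εf N)) N j k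
            * x ((k:ℝ) * εf N) := by
    rw [hA N]
    rw [← Fin.sum_univ_eq_sum_range (fun j => ∑ k ∈ range N,
      y ((j:ℝ) * εf N) * auxA m a₁ a₂ (εf N) (fun i => W ((i:ℝ) * εf N)) N j k
        * x ((k:ℝ) * εf N)) N]
    apply Finset.sum_congr rfl
    intro j _
    rw [← Fin.sum_univ_eq_sum_range (fun k =>
      y ((j:ℕ) * εf N) * auxA m a₁ a₂ (εf N) (fun i => W ((i:ℝ) * εf N)) N (j:ℕ) k
        * x ((k:ℝ) * εf N)) N]
    apply Finset.sum_congr rfl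
    intro k _
    congr 1
    congr 1
    rw [Matrix.of_apply]
    unfold auxA
    by_cases h2 : j = k
    · subst h2
      have h1 : ¬((j:ℕ) + 1 = (j:ℕ) ∨ (j:ℕ) + 1 = (j:ℕ)) := by omega
      rw [if_neg h1, if_neg h1, if_pos rfl, if_pos rfl]
    · by_cases h1 : ((j:ℕ) + 1 = (k:ℕ) ∨ (k:ℕ) + 1 = (j:ℕ))
      · rw [if_pos h1, if_pos h1]
      · have h2' : ¬((j:ℕ) = (k:ℕ)) := fun h => h2 (Fin.val_injective h)
        rw [if_neg h1, if_neg h1, if_neg h2, if_neg h2']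
  rw [hconv]
  rw [sum_identity m a₁ a₂ (εf N) (fun i => W ((i:ℝ) * εf N))
    (fun j => y ((j:ℝ) * εf N)) (fun j => x ((j:ℝ) * εf N)) N hN2]
  have hu0 : y (((0:ℕ):ℝ) * εf N) = y 0 := by norm_num
  have hv0 : x (((0:ℕ):ℝ) * εf N) = x 0 := by norm_num
  have huT : y (((N-1:ℕ):ℝ) * εf N) = y T := by rw [hend N hN2]
  have hvT : x (((N-1:ℕ):ℝ) * εf N) = x T := by rw [hend N hN2]
  have hF2eq : (1/m) * F2 N
      = (εf N / m) * ∑ j ∈ range (N-1),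
          W ((j:ℝ) * εf N) * (y ((j:ℝ) * εf N) * x ((j:ℝ) * εf N)) := by
    simp only [hF2, Finset.mul_sum]
    apply Finset.sum_congr rfl
    intro j _
    ring
  simp only [hu0, hv0, huT, hvT]
  rw [hF2eq]
  simp only [hF1]
  push_cast
  ring
end
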